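/- arXiv:2410.22676 — 11 statements merged into one kernel-verified Lean document; each statement's English description precedes it below -/
import Mathlib

section
/- Let n, k be positive integers with n ≥ 2k. If F ⊆ ([n] choose k) is an intersecting family (every two members have nonempty intersection), then |F| ≤ C(n-1, k-1). -/
/-!
Mathlib's `Finset.erdos_ko_rado` (proved via Kruskal–Katona) covers families on `Fin n`. Pulling a
family back along an embedding `Fin n ↪ α` whose range contains all its members preserves its
size, uniformity and the intersecting property, so the bound holds on any finite ground set, here
`Icc 1 n`.
-/

open Finset

namespace Finset

variable {α : Type*}

lemma map_preimage_of_coe_subset_range {β : Type*} (e : β ↪ α) {A : Finset α}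
    (hA : (A : Set α) ⊆ Set.range e) : (A.preimage e e.injective.injOn).map e = A :=
  coe_injective <| by simpa using Set.image_preimage_eq_of_subset hA

variable [DecidableEq α]

theorem erdos_ko_rado_of_embedding {n r : ℕ} (e : Fin n ↪ α) {𝒜 : Finset (Finset α)}
    (h𝒜 : (𝒜 : Set (Finset α)).Intersecting) (h₂ : (𝒜 : Set (Finset α)).Sized r)
    (hrange : ∀ A ∈ 𝒜, (A : Set α) ⊆ Set.range e) (h₃ : r ≤ n / 2) :
    #𝒜 ≤ (n - 1).choose (r - 1) := by
  set pullback : Finset α → Finset (Fin n) := fun A ↦ A.preimage e e.injective.injOn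
  have hleftInv : ∀ A ∈ 𝒜, (pullback A).map e = A := fun A hA ↦
    map_preimage_of_coe_subset_range e (hrange A hA)
  have hinj : Set.InjOn pullback 𝒜 := fun A hA B hB hAB ↦ by
    rw [← hleftInv A hA, ← hleftInv B hB, hAB]
  rw [← card_image_of_injOn hinj]
  refine erdos_ko_rado ?_ ?_ h₃ <;> rw [coe_image]
  · rintro _ ⟨A, hA, rfl⟩ _ ⟨B, hB, rfl⟩ hdisj
    have := (disjoint_map e).2 hdisj
    rw [hleftInv A hA, hleftInv B hB] at this
    exact h𝒜 hA hB this
  · rintro _ ⟨A, hA, rfl⟩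
    rw [← card_map e, hleftInv A hA, h₂ hA]

theorem erdos_ko_rado_of_forall_subset {s : Finset α} {𝒜 : Finset (Finset α)} {r : ℕ}
    (h𝒜 : (𝒜 : Set (Finset α)).Intersecting) (h₂ : (𝒜 : Set (Finset α)).Sized r)
    (hs : ∀ A ∈ 𝒜, A ⊆ s) (h₃ : r ≤ #s / 2) :
    #𝒜 ≤ (#s - 1).choose (r - 1) := by
  let e : Fin #s ↪ α := s.equivFin.symm.toEmbedding.trans (Function.Embedding.subtype (· ∈ s))
  have hrange : Set.range e = s := by
    change Set.range (Subtype.val ∘ s.equivFin.symm) = s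
    rw [Set.range_comp, s.equivFin.symm.range_eq_univ, Set.image_univ, Subtype.range_coe]
  refine erdos_ko_rado_of_embedding e h𝒜 h₂ (fun A hA ↦ ?_) h₃
  rw [hrange]
  exact_mod_cast hs A hA

end Finset

theorem EKR_general (n k : ℕ) (hn : 2 * k ≤ n)
    (F : Finset (Finset ℕ))
    (hF : ∀ A ∈ F, A ∈ (Finset.Icc 1 n).powersetCard k)
    (hint : ∀ A ∈ F, ∀ B ∈ F, (A ∩ B).Nonempty) :
    F.card ≤ (n - 1).choose (k - 1) := by
  have hcard : #(Icc 1 n) = n := by simp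
  have hintersecting : (F : Set (Finset ℕ)).Intersecting := fun A hA B hB ↦
    not_disjoint_iff_nonempty_inter.2 (hint A hA B hB)
  have hsized : (F : Set (Finset ℕ)).Sized k := fun A hA ↦ (mem_powersetCard.1 (hF A hA)).2
  simpa [hcard] using erdos_ko_rado_of_forall_subset hintersecting hsized
    (fun A hA ↦ (mem_powersetCard.1 (hF A hA)).1) (by omega : k ≤ #(Icc 1 n) / 2)

theorem EKR (n k : ℕ) (hk : 0 < k) (hn : 2 * k ≤ n)
    (F : Finset (Finset ℕ))
    (hF : ∀ A ∈ F, A ∈ (Finset.Icc 1 n).powersetCard k)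
    (hint : ∀ A ∈ F, ∀ B ∈ F, (A ∩ B).Nonempty) :
    F.card ≤ (n - 1).choose (k - 1) :=
  EKR_general n k hn F hF hint
end

section
/- Let n, k be positive integers with n ≥ 2k and k ≥ 1. If F ⊆ ([n] choose k) is intersecting and |F| = C(n-1, k-1) with n > 2k, then there exists p ∈ [n] such that F = {A ∈ ([n] choose k) : p ∈ A}. -/
/-!
Frankl's shifting argument. Compressing an intersecting family `F` along `i < j` (replacing `j`
by `i` wherever the result is new) keeps it intersecting, keeps its size and lowers the total of
the elements of its members, so finitely many compressions make it shifted.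

A shifted extremal family is a full star: sliced at the largest point `m`, both slices obey the
Erdős–Ko–Rado bound, so the sets through `m` form an extremal family for `k - 1`, a full star by
induction; its centre `p` lies in every member of `F`, since one avoiding it would miss some
`T + p + m`.

Conversely, if the compression of `F` is a full star with centre `p`, so is `F`. For `p ≠ i`
this is immediate. For `p = i`, every `(k - 1)`-set `X` avoiding `i, j` has `X + i` or `X + j`
in `F`, the two resulting families of such `X` are cross-intersecting, and since `n > 2k` the
Kneser graph on `(k - 1)`-sets is connected, so one of the two families is empty.
-/

open Finset UV
open scoped FinsetFamily

section

variable {α : Type*} [DecidableEq α]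

def fullStar (V : Finset α) (k : ℕ) (p : α) : Finset (Finset α) :=
  {A ∈ V.powersetCard k | p ∈ A}

@[simp]
theorem mem_fullStar {V A : Finset α} {k : ℕ} {p : α} :
    A ∈ fullStar V k p ↔ A ⊆ V ∧ #A = k ∧ p ∈ A := by
  simp [fullStar, and_assoc]

theorem subset_fullStar {V : Finset α} {k : ℕ} {p : α} {F : Finset (Finset α)}
    (hF : F ⊆ V.powersetCard k) (hp : ∀ A ∈ F, p ∈ A) : F ⊆ fullStar V k p := fun A hA =>
  mem_filter.2 ⟨hF hA, hp A hA⟩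

theorem card_fullStar {V : Finset α} {k : ℕ} {p : α} (hp : p ∈ V) (hk : 1 ≤ k) :
    #(fullStar V k p) = (#V - 1).choose (k - 1) := by
  simpa [fullStar] using card_filter_powersetCard_subset {p} V k (by simpa) (by simpa)

theorem eq_fullStar_of_subset {V : Finset α} {k : ℕ} {p : α} {F : Finset (Finset α)}
    (hp : p ∈ V) (hk : 1 ≤ k) (hF : F ⊆ fullStar V k p)
    (hcard : #F = (#V - 1).choose (k - 1)) : F = fullStar V k p :=
  eq_of_subset_of_card_le hF (by rw [card_fullStar hp hk, hcard])

theorem card_le_choose_of_intersecting {V : Finset α} {k : ℕ} {F : Finset (Finset α)}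
    (hF : F ⊆ V.powersetCard k) (hI : (F : Set (Finset α)).Intersecting) (hV : 2 * k ≤ #V) :
    #F ≤ (#V - 1).choose (k - 1) := by
  let ψ : Fin #V ↪ α := V.equivFin.symm.toEmbedding.trans (.subtype _)
  let φ : Finset α → Finset (Fin #V) := fun A => {t | ψ t ∈ A}
  have hφ : ∀ A ∈ F, (φ A).map ψ = A := by
    intro A hA
    ext x
    simp only [mem_map, mem_filter, mem_univ, true_and, φ]
    refine ⟨by rintro ⟨t, ht, rfl⟩; exact ht, fun hx => ?_⟩
    have hxV := (mem_powersetCard.1 (hF hA)).1 hx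
    exact ⟨V.equivFin ⟨x, hxV⟩, by simpa [ψ] using hx, by simp [ψ]⟩
  have hinj : Set.InjOn φ F := fun A hA B hB h => by rw [← hφ A hA, ← hφ B hB, h]
  rw [← card_image_of_injOn hinj]
  refine erdos_ko_rado ?_ ?_ (by omega)
  · simp only [coe_image]
    rintro _ ⟨A, hA, rfl⟩ _ ⟨B, hB, rfl⟩ h
    exact hI hA hB (by rw [← hφ A hA, ← hφ B hB]; exact (disjoint_map ψ).2 h)
  · simp only [coe_image]
    rintro _ ⟨A, hA, rfl⟩
    rw [← card_map ψ, hφ A hA, (mem_powersetCard.1 (hF hA)).2]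

theorem compress_singleton (i j : α) (A : Finset α) :
    compress {i} {j} A = if i ∉ A ∧ j ∈ A then insert i (A.erase j) else A := by
  unfold compress
  simp only [disjoint_singleton_left, singleton_subset_iff]
  split_ifs with h
  · ext x
    simp only [sup_eq_union, mem_sdiff, mem_union, mem_singleton, mem_insert, mem_erase]
    constructor
    · rintro ⟨hx | rfl, hxj⟩ <;> tauto
    · rintro (rfl | ⟨hxj, hx⟩)
      · exact ⟨Or.inr rfl, fun hij => h.1 (hij ▸ h.2)⟩
      · exact ⟨Or.inl hx, hxj⟩
  · rfl

theorem compress_subset_insert (i j : α) (A : Finset α) : compress {i} {j} A ⊆ insert i A := by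
  rw [compress_singleton]
  split_ifs
  · exact insert_subset_insert _ (erase_subset _ _)
  · exact subset_insert _ _

theorem compress_insert_of_ne {i j m : α} (hmi : m ≠ i) (hmj : m ≠ j) (X : Finset α) :
    compress {i} {j} (insert m X) = insert m (compress {i} {j} X) := by
  rw [compress_singleton, compress_singleton]
  simp only [mem_insert, hmi.symm, hmj.symm, false_or]
  split_ifs
  · rw [erase_insert_of_ne hmj, insert_comm]
  · rfl

theorem compression_subset_powersetCard {V : Finset α} {k : ℕ} {F : Finset (Finset α)}
    {i : α} (hi : i ∈ V) (j : α) (hF : F ⊆ V.powersetCard k) :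
    𝓒 {i} {j} F ⊆ V.powersetCard k := by
  have hsized := Set.Sized.uvCompression (u := {i}) (v := {j}) rfl
    (fun A hA => (mem_powersetCard.1 (hF hA)).2)
  intro A hA
  refine mem_powersetCard.2 ⟨?_, hsized hA⟩
  obtain ⟨hA, -⟩ | ⟨-, B, hB, rfl⟩ := mem_compression.1 hA
  · exact (mem_powersetCard.1 (hF hA)).1
  · exact (compress_subset_insert i j B).trans (insert_subset hi (mem_powersetCard.1 (hF hB)).1)

theorem mem_and_notMem_of_mem_compression_of_notMem {F : Finset (Finset α)} {i j : α}
    {a : Finset α} (ha : a ∈ 𝓒 {i} {j} F) (haF : a ∉ F) : i ∈ a ∧ j ∉ a :=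
  ⟨by simpa using le_of_mem_compression_of_notMem ha haF,
    by simpa using disjoint_of_mem_compression_of_notMem ha haF⟩

theorem Set.Intersecting.uvCompression {F : Finset (Finset α)}
    (hI : (F : Set (Finset α)).Intersecting) (i j : α) :
    ((𝓒 {i} {j} F : Finset (Finset α)) : Set (Finset α)).Intersecting := by
  have key : ∀ a ∈ 𝓒 {i} {j} F, a ∉ F → ∀ b ∈ 𝓒 {i} {j} F, b ∈ F → ¬Disjoint a b := by
    intro a ha haF b hb hbF hab
    obtain ⟨hia, hja⟩ := mem_and_notMem_of_mem_compression_of_notMem ha haF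
    have ha' : (a ∪ {j}) \ {i} ∈ F := sup_sdiff_mem_of_mem_compression_of_notMem ha haF
    obtain ⟨x, hxa, hxb⟩ := Finset.not_disjoint_iff.1 (hI ha' hbF)
    simp only [Finset.mem_sdiff, Finset.mem_union, Finset.mem_singleton] at hxa
    by_cases hxj : x = j
    · subst hxj
      by_cases hib : i ∈ b
      · exact Finset.disjoint_left.1 hab hia hib
      -- `b` survived although it can be compressed, so its compression lies in `F` as well
      have hb' : (b ∪ {i}) \ {x} ∈ F :=
        sup_sdiff_mem_of_mem_compression hb (by simpa using hxb) (by simpa using hib)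
      obtain ⟨y, hya, hyb⟩ := Finset.not_disjoint_iff.1 (hI ha' hb')
      simp only [Finset.mem_sdiff, Finset.mem_union, Finset.mem_singleton] at hya hyb
      exact Finset.disjoint_left.1 hab (hya.1.resolve_right hyb.2) (hyb.1.resolve_right hya.2)
    · exact Finset.disjoint_left.1 hab (hxa.1.resolve_right hxj) hxb
  intro a ha b hb
  by_cases haF : a ∈ F <;> by_cases hbF : b ∈ F
  · exact hI haF hbF
  · exact fun h => key b hb hbF a ha haF h.symm
  · exact key a ha haF b hb hbF
  · exact fun h => Finset.disjoint_left.1 h (mem_and_notMem_of_mem_compression_of_notMem ha haF).1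
      (mem_and_notMem_of_mem_compression_of_notMem hb hbF).1

theorem mem_of_forall_mem_compression {F : Finset (Finset α)} {i j : α}
    (hc : ∀ B ∈ 𝓒 {i} {j} F, i ∈ B) {A : Finset α} (hA : A ∈ F) (hiA : i ∉ A) : j ∈ A := by
  have hcA : compress {i} {j} A ∉ F := fun h => hiA (hc A (mem_compression.2 (Or.inl ⟨hA, h⟩)))
  by_contra hjA
  rw [compress_singleton, if_neg (fun h => hjA h.2)] at hcA
  exact hcA hA

theorem insert_mem_or_insert_mem_of_mem_compression {F : Finset (Finset α)} {i j : α}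
    {X : Finset α} (hij : i ≠ j) (hiX : i ∉ X) (hX : insert i X ∈ 𝓒 {i} {j} F) :
    insert i X ∈ F ∨ insert j X ∈ F := by
  by_cases hXF : insert i X ∈ F
  · exact Or.inl hXF
  have hXj : (insert i X ∪ {j}) \ {i} ∈ F := sup_sdiff_mem_of_mem_compression_of_notMem hX hXF
  have : (insert i X ∪ {j}) \ {i} = insert j X := by
    ext z
    simp only [mem_sdiff, mem_union, mem_insert, mem_singleton]
    grind
  exact Or.inr (this ▸ hXj)

theorem exists_disjoint_of_card_sdiff_le_one {W X Y : Finset α} {l : ℕ} (hW : 2 * l < #W)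
    (hX : X ∈ W.powersetCard l) (hY : Y ⊆ W) (hXY : #(Y \ X) ≤ 1) :
    ∃ Z ∈ W.powersetCard l, Disjoint Z X ∧ Disjoint Z Y := by
  rw [mem_powersetCard] at hX
  have hcard : #(Y ∪ X) ≤ l + 1 := by rw [← card_sdiff_add_card, hX.2]; omega
  obtain ⟨Z, hZ, hZc⟩ := exists_subset_card_eq (s := W \ (Y ∪ X)) (n := l) (by
    rw [card_sdiff_of_subset (union_subset hY hX.1)]; omega)
  have hZYX : Disjoint Z (Y ∪ X) := disjoint_of_subset_left hZ disjoint_sdiff_self_left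
  exact ⟨Z, mem_powersetCard.2 ⟨hZ.trans sdiff_subset, hZc⟩,
    hZYX.mono_right subset_union_right, hZYX.mono_right subset_union_left⟩

/-- The connectedness of the Kneser graph `K(W, l)` for `2 * l < #W`. -/
theorem eq_empty_or_eq_empty_of_cover_of_crossIntersecting {W : Finset α} {l : ℕ}
    (hW : 2 * l < #W) {G H : Finset (Finset α)} (hG : G ⊆ W.powersetCard l)
    (hH : H ⊆ W.powersetCard l) (hcover : W.powersetCard l ⊆ G ∪ H)
    (hcross : ∀ X ∈ G, ∀ Y ∈ H, ¬Disjoint X Y) : G = ∅ ∨ H = ∅ := by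
  have hfar : ∀ X ∈ G, ∀ Y ∈ H, 1 < #(Y \ X) := by
    intro X hX Y hY
    by_contra! h
    obtain ⟨Z, hZ, hZX, hZY⟩ :=
      exists_disjoint_of_card_sdiff_le_one hW (hG hX) (mem_powersetCard.1 (hH hY)).1 h
    rcases mem_union.1 (hcover hZ) with hZ | hZ
    · exact hcross Z hZ Y hY hZY
    · exact hcross X hX Z hZ hZX.symm
  by_contra! hne
  obtain ⟨⟨X, Y⟩, hXY, hmin⟩ := exists_min_image (G ×ˢ H) (fun q => #(q.2 \ q.1))
    (hne.1.product hne.2)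
  obtain ⟨hX, hY⟩ := mem_product.1 hXY
  obtain ⟨hXW, hXl⟩ := mem_powersetCard.1 (hG hX)
  obtain ⟨hYW, hYl⟩ := mem_powersetCard.1 (hH hY)
  obtain ⟨y, hy⟩ : (Y \ X).Nonempty := card_pos.1 (by linarith [hfar X hX Y hY])
  obtain ⟨x, hx⟩ : (X \ Y).Nonempty :=
    card_pos.1 (by rw [card_sdiff_comm (hXl.trans hYl.symm)]; exact card_pos.2 ⟨y, hy⟩)
  rw [mem_sdiff] at hx hy
  -- exchanging `x` for `y` in `X` moves it one step towards `Y`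
  set X' := insert y (X.erase x)
  have hX' : X' ∈ W.powersetCard l := by
    refine mem_powersetCard.2 ⟨insert_subset (hYW hy.1) ((erase_subset _ _).trans hXW), ?_⟩
    rw [card_insert_of_notMem (fun h => hy.2 (mem_of_mem_erase h)), card_erase_of_mem hx.1, hXl]
    have : 0 < l := hXl ▸ card_pos.2 ⟨x, hx.1⟩
    omega
  rcases mem_union.1 (hcover hX') with hX'G | hX'H
  · have hlt : Y \ X' ⊂ Y \ X := by
      refine ssubset_iff_of_subset (fun z hz => ?_) |>.2 ⟨y, mem_sdiff.2 hy, by simp [X']⟩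
      simp only [mem_sdiff, mem_insert, mem_erase, X'] at hz ⊢
      exact ⟨hz.1, fun hzX => hz.2 (Or.inr ⟨fun hzx => hx.2 (hzx ▸ hz.1), hzX⟩)⟩
    exact (card_lt_card hlt).not_ge (hmin (X', Y) (mem_product.2 ⟨hX'G, hY⟩))
  · have : X' \ X ⊆ {y} := fun z hz => by
      simp only [mem_sdiff, mem_insert, mem_erase, X'] at hz
      simpa using hz.1.resolve_right (fun h => hz.2 h.2)
    exact (hfar X hX X' hX'H).not_ge ((card_le_card this).trans (card_singleton y).le)

theorem erase_mem_powersetCard_sdiff_pair {V A : Finset α} {k : ℕ} {a b : α}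
    (hA : A ∈ V.powersetCard k) (ha : a ∈ A) (hb : b ∉ A) :
    A.erase a ∈ (V \ {a, b}).powersetCard (k - 1) := by
  obtain ⟨hAV, hAk⟩ := mem_powersetCard.1 hA
  refine mem_powersetCard.2 ⟨fun x hx => ?_, by rw [card_erase_of_mem ha, hAk]⟩
  obtain ⟨hxa, hxA⟩ := mem_erase.1 hx
  simp only [mem_sdiff, mem_insert, mem_singleton, not_or]
  exact ⟨hAV hxA, hxa, fun hxb => hb (hxb ▸ hxA)⟩

theorem insert_mem_powersetCard_of_mem_sdiff_pair {V X : Finset α} {k : ℕ} {a b : α}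
    (ha : a ∈ V) (hk : 1 ≤ k) (hX : X ∈ (V \ {a, b}).powersetCard (k - 1)) :
    insert a X ∈ V.powersetCard k ∧ a ∉ X := by
  obtain ⟨hXV, hXk⟩ := mem_powersetCard.1 hX
  have haX : a ∉ X := fun h => by simpa using hXV h
  refine ⟨mem_powersetCard.2 ⟨insert_subset ha (hXV.trans sdiff_subset), ?_⟩, haX⟩
  rw [card_insert_of_notMem haX, hXk]
  omega

theorem subset_fullStar_of_compression_eq_fullStar {V : Finset α} {k : ℕ}
    {F : Finset (Finset α)} {i j p : α} (hpi : p ≠ i) (hF : F ⊆ V.powersetCard k)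
    (hc : 𝓒 {i} {j} F = fullStar V k p) : F ⊆ fullStar V k p := by
  refine subset_fullStar hF fun A hA => ?_
  have hpc := (mem_fullStar.1 (hc ▸ compress_mem_compression hA)).2.2
  exact (mem_insert.1 (compress_subset_insert i j A hpc)).resolve_left hpi

theorem eq_fullStar_or_eq_fullStar_of_compression_eq_fullStar {V : Finset α} {k : ℕ}
    {F : Finset (Finset α)} {i j : α} (hk : 1 ≤ k) (hV : 2 * k < #V) (hi : i ∈ V) (hj : j ∈ V)
    (hij : i ≠ j) (hF : F ⊆ V.powersetCard k) (hI : (F : Set (Finset α)).Intersecting)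
    (hc : 𝓒 {i} {j} F = fullStar V k i) : F = fullStar V k i ∨ F = fullStar V k j := by
  have hcard : #F = (#V - 1).choose (k - 1) := by
    rw [← card_compression {i} {j} F, hc, card_fullStar hi hk]
  set W := V \ {i, j}
  have hW : #W = #V - 2 := by
    rw [card_sdiff_of_subset (insert_subset hi (singleton_subset_iff.2 hj)), card_pair hij]
  set G := {X ∈ W.powersetCard (k - 1) | insert i X ∈ F}
  set H := {X ∈ W.powersetCard (k - 1) | insert j X ∈ F}
  have hmissing : ∀ A ∈ F, i ∉ A → j ∈ A ∧ A.erase j ∈ H := by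
    intro A hA hiA
    have hjA := mem_of_forall_mem_compression (fun B hB => (mem_fullStar.1 (hc ▸ hB)).2.2) hA hiA
    refine ⟨hjA, mem_filter.2 ⟨?_, by rwa [insert_erase hjA]⟩⟩
    rw [show W = V \ {j, i} from congrArg (V \ ·) (pair_comm i j)]
    exact erase_mem_powersetCard_sdiff_pair (hF hA) hjA hiA
  have hcover : W.powersetCard (k - 1) ⊆ G ∪ H := by
    intro X hX
    obtain ⟨hXi, hiX⟩ := insert_mem_powersetCard_of_mem_sdiff_pair hi hk hX
    have hXc : insert i X ∈ 𝓒 {i} {j} F := hc ▸ mem_filter.2 ⟨hXi, mem_insert_self i X⟩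
    rcases insert_mem_or_insert_mem_of_mem_compression hij hiX hXc with h | h
    · exact mem_union_left _ (mem_filter.2 ⟨hX, h⟩)
    · exact mem_union_right _ (mem_filter.2 ⟨hX, h⟩)
  have hcross : ∀ X ∈ G, ∀ Y ∈ H, ¬Disjoint X Y := by
    intro X hX Y hY hXY
    have hXW := (mem_powersetCard.1 (mem_filter.1 hX).1).1
    have hYW := (mem_powersetCard.1 (mem_filter.1 hY).1).1
    have hjX : j ∉ X := fun h => by simpa [W] using hXW h
    have hiY : i ∉ Y := fun h => by simpa [W] using hYW h
    refine hI (mem_filter.1 hX).2 (mem_filter.1 hY).2 ?_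
    rw [disjoint_insert_left, disjoint_insert_right]
    exact ⟨by simp [hij, hiY], hjX, hXY⟩
  rcases eq_empty_or_eq_empty_of_cover_of_crossIntersecting (G := G) (H := H) (by omega)
    (filter_subset _ _) (filter_subset _ _) hcover hcross with hG | hH
  · refine Or.inr (eq_fullStar_of_subset hj hk (subset_fullStar hF fun A hA => ?_) hcard)
    by_cases hiA : i ∈ A
    · by_contra hjA
      have : A.erase i ∈ G :=
        mem_filter.2 ⟨erase_mem_powersetCard_sdiff_pair (hF hA) hiA hjA, by rwa [insert_erase hiA]⟩
      rw [hG] at this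
      exact notMem_empty _ this
    · exact (hmissing A hA hiA).1
  · refine Or.inl (eq_fullStar_of_subset hi hk (subset_fullStar hF fun A hA => ?_) hcard)
    by_contra hiA
    have := (hmissing A hA hiA).2
    rw [hH] at this
    exact notMem_empty _ this

theorem exists_eq_fullStar_of_compression_eq_fullStar {V : Finset α} {k : ℕ}
    {F : Finset (Finset α)} {i j p : α} (hk : 1 ≤ k) (hV : 2 * k < #V) (hi : i ∈ V) (hj : j ∈ V)
    (hij : i ≠ j) (hp : p ∈ V) (hF : F ⊆ V.powersetCard k)
    (hI : (F : Set (Finset α)).Intersecting) (hc : 𝓒 {i} {j} F = fullStar V k p) :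
    ∃ q ∈ V, F = fullStar V k q := by
  obtain rfl | hpi := eq_or_ne p i
  · rcases eq_fullStar_or_eq_fullStar_of_compression_eq_fullStar hk hV hi hj hij hF hI hc
      with h | h
    exacts [⟨p, hp, h⟩, ⟨j, hj, h⟩]
  · refine ⟨p, hp, eq_fullStar_of_subset hp hk ?_ ?_⟩
    · exact subset_fullStar_of_compression_eq_fullStar hpi hF hc
    · rw [← card_compression {i} {j} F, hc, card_fullStar hp hk]

theorem forall_mem_of_memberSubfamily_eq_fullStar {V : Finset α} {k : ℕ}
    {F : Finset (Finset α)} {m p : α} (hk : 1 ≤ k) (hV : 2 * k + 2 ≤ #V) (hm : m ∈ V)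
    (hp : p ∈ V.erase m) (hF : F ⊆ V.powersetCard (k + 1))
    (hI : (F : Set (Finset α)).Intersecting)
    (htop : F.memberSubfamily m = fullStar (V.erase m) k p) : ∀ A ∈ F, p ∈ A := by
  intro A hA
  by_contra hpA
  obtain ⟨hAV, hAk⟩ := mem_powersetCard.1 (hF hA)
  by_cases hmA : m ∈ A
  · have : A.erase m ∈ F.memberSubfamily m :=
      mem_memberSubfamily.2 ⟨by rwa [insert_erase hmA], notMem_erase _ _⟩
    rw [htop] at this
    exact hpA (mem_of_mem_erase (mem_fullStar.1 this).2.2)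
  -- a member `T + p + m` of `F` misses `A`
  have hroom : k - 1 ≤ #(V.erase m \ insert p A) := by
    have := le_card_sdiff (insert p A) (V.erase m)
    rw [card_erase_of_mem hm, card_insert_of_notMem hpA, hAk] at this
    omega
  obtain ⟨T, hT, hTk⟩ := exists_subset_card_eq hroom
  have hpT : p ∉ T := fun h => (mem_sdiff.1 (hT h)).2 (mem_insert_self p A)
  have hpTm : insert p T ∈ fullStar (V.erase m) k p := by
    refine mem_fullStar.2 ⟨insert_subset hp (hT.trans sdiff_subset), ?_, mem_insert_self p T⟩
    rw [card_insert_of_notMem hpT, hTk]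
    omega
  rw [← htop, mem_memberSubfamily] at hpTm
  refine hI hpTm.1 hA ?_
  rw [disjoint_insert_left, disjoint_insert_left]
  exact ⟨hmA, hpA, disjoint_of_subset_left hT (disjoint_sdiff_self_left.mono_right
    (subset_insert p A))⟩

theorem memberSubfamily_subset_powersetCard {V : Finset α} {k : ℕ} {F : Finset (Finset α)}
    (hF : F ⊆ V.powersetCard (k + 1)) (m : α) :
    F.memberSubfamily m ⊆ (V.erase m).powersetCard k := by
  intro X hX
  obtain ⟨hXF, hmX⟩ := mem_memberSubfamily.1 hX
  obtain ⟨hXV, hXk⟩ := mem_powersetCard.1 (hF hXF)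
  rw [card_insert_of_notMem hmX] at hXk
  exact mem_powersetCard.2 ⟨subset_erase.2 ⟨(subset_insert m X).trans hXV, hmX⟩, by omega⟩

theorem nonMemberSubfamily_subset_powersetCard {V : Finset α} {k : ℕ} {F : Finset (Finset α)}
    (hF : F ⊆ V.powersetCard k) (m : α) :
    F.nonMemberSubfamily m ⊆ (V.erase m).powersetCard k := by
  intro A hA
  obtain ⟨hAF, hmA⟩ := mem_nonMemberSubfamily.1 hA
  exact mem_powersetCard.2 ⟨subset_erase.2 ⟨(mem_powersetCard.1 (hF hAF)).1, hmA⟩,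
    (mem_powersetCard.1 (hF hAF)).2⟩

/-- Both slices obey the Erdős–Ko–Rado bound, and by Pascal's rule these bounds add up to `#F`. -/
theorem card_memberSubfamily_of_card_eq {V : Finset α} {k : ℕ} {F : Finset (Finset α)}
    {m : α} (hk : 1 ≤ k) (hm : m ∈ V) (hV : 2 * k + 2 < #V) (hF : F ⊆ V.powersetCard (k + 1))
    (hI : (F : Set (Finset α)).Intersecting)
    (htopI : ((F.memberSubfamily m : Finset (Finset α)) : Set (Finset α)).Intersecting)
    (hcard : #F = (#V - 1).choose k) :
    #(F.memberSubfamily m) = (#(V.erase m) - 1).choose (k - 1) := by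
  have hbotI : ((F.nonMemberSubfamily m : Finset (Finset α)) : Set (Finset α)).Intersecting :=
    hI.mono (coe_subset.2 (filter_subset _ _))
  have htop_le := card_le_choose_of_intersecting (memberSubfamily_subset_powersetCard hF m) htopI
  have hbot_le := card_le_choose_of_intersecting (nonMemberSubfamily_subset_powersetCard hF m) hbotI
  have hsplit := card_memberSubfamily_add_card_nonMemberSubfamily m F
  obtain ⟨n, hn⟩ : ∃ n, #V = n + 2 := ⟨#V - 2, by omega⟩
  obtain ⟨l, rfl⟩ : ∃ l, k = l + 1 := ⟨k - 1, by omega⟩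
  rw [card_erase_of_mem hm, hn, show n + 2 - 1 = n + 1 by omega] at htop_le hbot_le ⊢
  rw [hn, show n + 2 - 1 = n + 1 by omega, Nat.choose_succ_succ'] at hcard
  simp only [Nat.add_sub_cancel] at htop_le hbot_le ⊢
  have := htop_le (by omega)
  have := hbot_le (by omega)
  omega

end

section Shifted

variable {α : Type*} [LinearOrder α]

def IsShifted (V : Finset α) (F : Finset (Finset α)) : Prop :=
  ∀ i ∈ V, ∀ j ∈ V, i < j → ∀ A ∈ F, compress {i} {j} A ∈ F

theorem IsShifted.memberSubfamily {V : Finset α} {F : Finset (Finset α)} (hs : IsShifted V F)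
    (m : α) : IsShifted (V.erase m) (F.memberSubfamily m) := by
  intro i hi j hj hij X hX
  rw [mem_memberSubfamily] at hX ⊢
  have hmi := (ne_of_mem_erase hi).symm
  have hmj := (ne_of_mem_erase hj).symm
  refine ⟨?_, fun h => hX.2 ((mem_insert.1 (compress_subset_insert i j X h)).resolve_left hmi)⟩
  rw [← compress_insert_of_ne hmi hmj]
  exact hs i (mem_of_mem_erase hi) j (mem_of_mem_erase hj) hij _ hX.1

theorem IsShifted.intersecting_memberSubfamily {V : Finset α} {k : ℕ} {F : Finset (Finset α)}
    {m : α} (hs : IsShifted V F) (hF : F ⊆ V.powersetCard k)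
    (hI : (F : Set (Finset α)).Intersecting) (hm : ∀ x ∈ V, x ≤ m) (hV : 2 * k ≤ #V) :
    ((F.memberSubfamily m : Finset (Finset α)) : Set (Finset α)).Intersecting := by
  intro X hX Y hY hXY
  rw [mem_coe, mem_memberSubfamily] at hX hY
  obtain ⟨hXV, hXk⟩ := mem_powersetCard.1 (hF hX.1)
  have hYk := (mem_powersetCard.1 (hF hY.1)).2
  rw [card_insert_of_notMem hX.2] at hXk
  rw [card_insert_of_notMem hY.2] at hYk
  have hlt : #(insert m (X ∪ Y)) < #V := by
    rw [card_insert_of_notMem (by simp [hX.2, hY.2]), card_union_of_disjoint hXY]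
    omega
  obtain ⟨x, hxV, hx⟩ := exists_mem_notMem_of_card_lt_card hlt
  simp only [mem_insert, mem_union, not_or] at hx
  -- shifting `m` down to `x` in `X + m` yields `X + x ∈ F`, which misses `Y + m`
  have hxX := hs x hxV m (hXV (mem_insert_self m X)) ((hm x hxV).lt_of_ne hx.1) _ hX.1
  rw [compress_singleton, if_pos ⟨by simp [hx.1, hx.2.1], mem_insert_self m X⟩,
    erase_insert hX.2] at hxX
  refine hI hxX hY.1 ?_
  rw [disjoint_insert_left, disjoint_insert_right]
  exact ⟨by simp [hx.1, hx.2.2], hX.2, hXY⟩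

theorem IsShifted.exists_eq_fullStar {k : ℕ} (hk : 1 ≤ k) {V : Finset α} (hV : 2 * k < #V)
    {F : Finset (Finset α)} (hF : F ⊆ V.powersetCard k)
    (hI : (F : Set (Finset α)).Intersecting) (hs : IsShifted V F)
    (hcard : #F = (#V - 1).choose (k - 1)) : ∃ p ∈ V, F = fullStar V k p := by
  induction k, hk using Nat.le_induction generalizing V F with
  | base =>
    rw [Nat.sub_self, Nat.choose_zero_right] at hcard
    obtain ⟨A, rfl⟩ := card_eq_one.1 hcard
    obtain ⟨hAV, hA1⟩ := mem_powersetCard.1 (hF (mem_singleton_self A))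
    obtain ⟨p, rfl⟩ := card_eq_one.1 hA1
    have hp : p ∈ V := hAV (mem_singleton_self p)
    exact ⟨p, hp, eq_fullStar_of_subset hp le_rfl (by simpa using hAV) (by simp)⟩
  | succ k hk ih =>
    obtain ⟨m, hm, hmax⟩ := exists_max_image V id (card_pos.1 (by omega))
    have htopI := hs.intersecting_memberSubfamily hF hI hmax (by omega)
    obtain ⟨p, hp, htop⟩ := ih (by rw [card_erase_of_mem hm]; omega)
      (memberSubfamily_subset_powersetCard hF m) htopI (hs.memberSubfamily m)
      (card_memberSubfamily_of_card_eq hk hm (by omega) hF hI htopI hcard)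
    have hpV := mem_of_mem_erase hp
    exact ⟨p, hpV, eq_fullStar_of_subset hpV (by omega) (subset_fullStar hF
      (forall_mem_of_memberSubfamily_eq_fullStar hk (by omega) hm hp hF hI htop)) hcard⟩

end Shifted

def weight (F : Finset (Finset ℕ)) : ℕ := ∑ A ∈ F, ∑ x ∈ A, x

theorem sum_compress_lt {i j : ℕ} (hij : i < j) {A : Finset ℕ} (hA : compress {i} {j} A ≠ A) :
    ∑ x ∈ compress {i} {j} A, x < ∑ x ∈ A, x := by
  rw [compress_singleton] at hA ⊢
  split_ifs at hA ⊢ with h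
  · rw [sum_insert (fun h' => h.1 (mem_of_mem_erase h')), ← add_sum_erase A _ h.2]
    omega
  · exact absurd rfl hA

theorem weight_compression_lt {i j : ℕ} (hij : i < j) {F : Finset (Finset ℕ)} {A : Finset ℕ}
    (hA : A ∈ F) (hcA : compress {i} {j} A ∉ F) : weight (𝓒 {i} {j} F) < weight F := by
  rw [weight, weight, compression, sum_union compress_disjoint, filter_image,
    sum_image compress_injOn]
  conv_rhs => rw [← filter_union_filter_not_eq (fun a => compress {i} {j} a ∈ F) F]
  rw [sum_union (disjoint_filter_filter_not _ _ _), add_lt_add_iff_left]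
  refine sum_lt_sum_of_nonempty ⟨A, mem_filter.2 ⟨hA, hcA⟩⟩ fun B hB => sum_compress_lt hij ?_
  exact fun h => (mem_filter.1 hB).2 (by rw [h]; exact (mem_filter.1 hB).1)

theorem exists_eq_fullStar_of_intersecting {V : Finset ℕ} {k : ℕ} (hk : 1 ≤ k)
    (hV : 2 * k < #V) {F : Finset (Finset ℕ)} (hF : F ⊆ V.powersetCard k)
    (hI : (F : Set (Finset ℕ)).Intersecting) (hcard : #F = (#V - 1).choose (k - 1)) :
    ∃ p ∈ V, F = fullStar V k p := by
  induction hw : weight F using Nat.strong_induction_on generalizing F with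
  | _ w ih =>
    by_cases hs : IsShifted V F
    · exact hs.exists_eq_fullStar hk hV hF hI hcard
    simp only [IsShifted, not_forall] at hs
    obtain ⟨i, hi, j, hj, hij, A, hA, hcA⟩ := hs
    obtain ⟨p, hp, hc⟩ := ih _ (hw ▸ weight_compression_lt hij hA hcA)
      (compression_subset_powersetCard hi j hF) (hI.uvCompression i j)
      (by rw [card_compression, hcard]) rfl
    exact exists_eq_fullStar_of_compression_eq_fullStar hk hV hi hj hij.ne hp hF hI hc

theorem EKR_extremal (n k : ℕ) (hk : 1 ≤ k) (hn : 2 * k < n)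
    (F : Finset (Finset ℕ))
    (hF : ∀ A ∈ F, A ∈ (Finset.Icc 1 n).powersetCard k)
    (hint : ∀ A ∈ F, ∀ B ∈ F, (A ∩ B).Nonempty)
    (hcard : F.card = (n - 1).choose (k - 1)) :
    ∃ p ∈ Finset.Icc 1 n,
      F = ((Finset.Icc 1 n).powersetCard k).filter (fun A => p ∈ A) := by
  have hV : #(Icc 1 n) = n := by simp
  exact exists_eq_fullStar_of_intersecting hk (by rwa [hV]) (fun A hA => hF A hA)
    (fun A hA B hB => not_disjoint_iff_nonempty_inter.2 (hint A hA B hB)) (by rwa [hV])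
end

section
/- For 3 ≤ i ≤ k+1, the family M_i = {F ∈ ([n] choose k) : 1 ∈ F and F ∩ [2,i] ≠ ∅} ∪ {F ∈ ([n] choose k) : 1 ∉ F and [2,i] ⊆ F} is intersecting and has size |M_i| = Σ_{j=2}^{i} C(n-j, k-2) + C(n-i, k-i+1). -/
/-!
Two members of `M_i` meet in `1`, or both contain `2`, or one contains all of `[2,i]` and the
other some element of it. For the count, a member containing `1` is classified by the least
element `j` of `F ∩ [2,i]`: these are the `k`-subsets of `[n] \ [2,j)` containing `{1, j}`, so
there are `C(n-j, k-2)` of them. A member avoiding `1` is a `k`-subset of `[2,n]` containing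
`[2,i]`, of which there are `C(n-i, k+1-i)`.
-/

open Finset

/-- The family `M_i` on ground set `[n] = {1,…,n}`. -/
def familyM (n k i : ℕ) : Finset (Finset ℕ) :=
  ((Finset.Icc 1 n).powersetCard k).filter
    (fun F => (1 ∈ F ∧ (F ∩ Finset.Icc 2 i).Nonempty) ∨
              (1 ∉ F ∧ Finset.Icc 2 i ⊆ F))

namespace Finset

variable {α : Type*} [DecidableEq α]

theorem filter_powersetCard_disjoint (s t : Finset α) (k : ℕ) :
    {F ∈ s.powersetCard k | Disjoint F t} = (s \ t).powersetCard k := by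
  ext F
  simp only [mem_filter, mem_powersetCard, subset_sdiff]
  tauto

theorem card_filter_powersetCard_subset_disjoint {s a b : Finset α} {k : ℕ} (has : a ⊆ s)
    (hab : Disjoint a b) (hak : #a ≤ k) :
    #{F ∈ s.powersetCard k | a ⊆ F ∧ Disjoint F b} = (#(s \ b) - #a).choose (k - #a) := by
  simp_rw [and_comm (a := a ⊆ _), ← filter_filter, filter_powersetCard_disjoint]
  exact card_filter_powersetCard_subset a _ k (subset_sdiff.2 ⟨has, hab⟩) hak

theorem card_filter_inter_nonempty_eq_sum [LinearOrder α] (𝒜 : Finset (Finset α)) (s : Finset α) :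
    #{F ∈ 𝒜 | (F ∩ s).Nonempty} =
      ∑ j ∈ s, #{F ∈ 𝒜 | j ∈ F ∧ Disjoint F {x ∈ s | x < j}} := by
  rw [← card_biUnion]
  · congr 1
    ext F
    simp only [mem_filter, mem_biUnion]
    constructor
    · rintro ⟨hF, hne⟩
      obtain ⟨hmF, hms⟩ := mem_inter.1 ((F ∩ s).min'_mem hne)
      refine ⟨_, hms, hF, hmF, disjoint_left.2 fun x hxF hx => ?_⟩
      rw [mem_filter] at hx
      exact hx.2.not_ge ((F ∩ s).min'_le x (mem_inter.2 ⟨hxF, hx.1⟩))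
    · rintro ⟨j, hjs, hF, hjF, -⟩
      exact ⟨hF, j, mem_inter.2 ⟨hjF, hjs⟩⟩
  · intro j hj j' hj' hne
    refine disjoint_left.2 fun F hF hF' => ?_
    rw [mem_filter] at hF hF'
    rcases lt_or_gt_of_ne hne with h | h
    · exact disjoint_left.1 hF'.2.2 hF.2.1 (mem_filter.2 ⟨hj, h⟩)
    · exact disjoint_left.1 hF.2.2 hF'.2.1 (mem_filter.2 ⟨hj', h⟩)

end Finset

theorem familyM_intersecting {n k i : ℕ} (hi : 2 ≤ i) :
    ∀ A ∈ familyM n k i, ∀ B ∈ familyM n k i, (A ∩ B).Nonempty := by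
  have h2 : 2 ∈ Icc 2 i := mem_Icc.2 ⟨le_rfl, hi⟩
  simp only [familyM, mem_filter]
  rintro A ⟨-, ⟨h1A, x, hxA⟩ | ⟨h1A, hA⟩⟩ B ⟨-, ⟨h1B, y, hyB⟩ | ⟨h1B, hB⟩⟩
  · exact ⟨1, mem_inter.2 ⟨h1A, h1B⟩⟩
  · exact ⟨x, mem_inter.2 ⟨(mem_inter.1 hxA).1, hB (mem_inter.1 hxA).2⟩⟩
  · exact ⟨y, mem_inter.2 ⟨hA (mem_inter.1 hyB).2, (mem_inter.1 hyB).1⟩⟩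
  · exact ⟨2, mem_inter.2 ⟨hA h2, hB h2⟩⟩

theorem card_filter_one_mem_inter_Icc_two_nonempty {n k i : ℕ} (hk : 2 ≤ k) (hin : i ≤ n) :
    #{F ∈ (Icc 1 n).powersetCard k | 1 ∈ F ∧ (F ∩ Icc 2 i).Nonempty} =
      ∑ j ∈ Icc 2 i, (n - j).choose (k - 2) := by
  rw [← filter_filter, card_filter_inter_nonempty_eq_sum]
  refine sum_congr rfl fun j hj => ?_
  obtain ⟨h2j, hji⟩ := mem_Icc.1 hj
  have hlt : {x ∈ Icc 2 i | x < j} = Ico 2 j := by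
    ext x; simp only [mem_filter, mem_Icc, mem_Ico]; omega
  have hpair : ({1, j} : Finset ℕ) ⊆ Icc 1 n := by
    intro x hx; simp only [mem_insert, mem_singleton] at hx; rw [mem_Icc]; omega
  have hdisj : Disjoint ({1, j} : Finset ℕ) (Ico 2 j) := by
    simp only [disjoint_insert_left, disjoint_singleton_left, mem_Ico]; omega
  have hcard : #({1, j} : Finset ℕ) = 2 := card_pair (by omega)
  rw [filter_filter, hlt, filter_congr (q := fun F => {1, j} ⊆ F ∧ Disjoint F (Ico 2 j))
    fun F _ => by rw [insert_subset_iff, singleton_subset_iff, and_assoc],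
    card_filter_powersetCard_subset_disjoint hpair hdisj (hcard ▸ hk), hcard,
    card_sdiff_of_subset (Ico_subset_Icc_self.trans (Icc_subset_Icc (by omega) (by omega))),
    Nat.card_Icc, Nat.card_Ico]
  congr 1
  omega

theorem card_filter_one_notMem_Icc_two_subset {n k i : ℕ} (hi : 1 ≤ i) (hik : i ≤ k + 1)
    (hin : i ≤ n) :
    #{F ∈ (Icc 1 n).powersetCard k | 1 ∉ F ∧ Icc 2 i ⊆ F} = (n - i).choose (k + 1 - i) := by
  have hsub : Icc 2 i ⊆ Icc 1 n := Icc_subset_Icc (by omega) hin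
  have hdisj : Disjoint (Icc 2 i) {1} := by simp
  rw [filter_congr (q := fun F => Icc 2 i ⊆ F ∧ Disjoint F {1})
      fun F _ => by rw [disjoint_singleton_right, and_comm],
    card_filter_powersetCard_subset_disjoint hsub hdisj (by rw [Nat.card_Icc]; omega),
    card_sdiff_of_subset (singleton_subset_iff.2 (mem_Icc.2 ⟨le_rfl, by omega⟩)), Nat.card_Icc, card_singleton, Nat.card_Icc]
  congr 1 <;> omega

theorem familyM_intersecting_and_card (n k i : ℕ) (hk : 3 ≤ i) (hik : i ≤ k + 1)
    (hn : 2 * k ≤ n) :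
    (∀ A ∈ familyM n k i, ∀ B ∈ familyM n k i, (A ∩ B).Nonempty) ∧
    (familyM n k i).card =
      (∑ j ∈ Finset.Icc 2 i, (n - j).choose (k - 2)) + (n - i).choose (k + 1 - i) := by
  refine ⟨familyM_intersecting (by omega), ?_⟩
  rw [familyM, filter_or, card_union_of_disjoint (disjoint_filter.2 fun _ _ h h' => h'.1 h.1),
    card_filter_one_mem_inter_Icc_two_nonempty (by omega) (by omega),
    card_filter_one_notMem_Icc_two_subset (by omega) hik (by omega)]
end

section
/- Let F = {F₁,...,F_m} ⊆ 2^[n]. Suppose for each F_i one can choose a set X_i ⊆ [n] and a collection R_i of s intersection properties (pairs (P, β) with P ⊆ [n], β a nonnegative integer, where a set X satisfies (P,β) iff |X ∩ P| = β) such that: (1) X_i satisfies no condition in R_i; (2) X_i satisfies at least one condition in R_j for every j > i. Then m ≤ Σ_{h=0}^{s} C(n, h). -/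
/-!
Evaluate polynomials at the indicator vectors of the sets `X i`. To the `j`-th set attach
`f_j(x) = ∏_a (∑_{b ∈ P_{j,a}} x_b - β_{j,a})`; its values `f_j(X_i)` form a triangular matrix
with nonzero diagonal, so the value vectors `(f_j(X_i))_i` are linearly independent. On
`0/1`-points, multilinear reduction writes every `f_j` as a combination of the monomials
`x_T = ∏_{b ∈ T} x_b` with `|T| ≤ s`, whose value vectors are `i ↦ [T ⊆ X i]`; there are
`∑_{h ≤ s} C(n, h)` of them.
-/

open Finset

theorem linearIndependent_of_triangular {ι K : Type*} [Fintype ι] [LinearOrder ι]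
    [CommRing K] [IsDomain K] (f : ι → ι → K) (hdiag : ∀ i, f i i ≠ 0)
    (htri : ∀ i j, i < j → f j i = 0) : LinearIndependent K f := by
  classical
  have hupper : (Matrix.of f).IsUpperTriangular := fun j i hij => htri i j hij
  refine Matrix.linearIndependent_rows_of_det_ne_zero (A := Matrix.of f) ?_
  rw [Matrix.det_of_isUpperTriangular hupper]
  exact prod_ne_zero_iff.mpr fun i _ => hdiag i

theorem card_powerset_filter_card_le {α : Type*} (U : Finset α) (d : ℕ) :
    #(U.powerset.filter (#· ≤ d)) = ∑ h ∈ range (d + 1), U.card.choose h := by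
  classical
  have hunion : U.powerset.filter (#· ≤ d) = (range (d + 1)).biUnion (powersetCard · U) := by
    ext T
    simp only [mem_filter, mem_powerset, mem_biUnion, mem_range, mem_powersetCard]
    exact ⟨fun ⟨hsub, hcard⟩ => ⟨#T, by omega, hsub, rfl⟩,
      fun ⟨h, hh, hsub, hcard⟩ => ⟨hsub, by omega⟩⟩
  rw [hunion, card_biUnion fun a _ b _ hab => U.pairwise_disjoint_powersetCard hab]
  simp only [card_powersetCard]

section SubsetIndicator

variable {ι α R : Type*} [DecidableEq α] (X : ι → Finset α)

def subsetIndicator [Zero R] [One R] (T : Finset α) : ι → R :=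
  fun i => if T ⊆ X i then 1 else 0

def indicatorSpan [CommRing R] (U : Finset α) (d : ℕ) : Submodule R (ι → R) :=
  Submodule.span R (Set.range fun T : U.powerset.filter (#· ≤ d) => subsetIndicator X T)

variable [CommRing R]

/-- Multilinear reduction: `x_b x_T = x_{T ∪ {b}}` because `x_b² = x_b` on `0/1`-points. -/
theorem subsetIndicator_mul_card_inter (T P : Finset α) :
    subsetIndicator X T * (fun i => ((X i ∩ P).card : R)) =
      ∑ b ∈ P, subsetIndicator X (insert b T) := by
  ext i
  rw [Pi.mul_apply, inter_comm, ← filter_mem_eq_inter, card_filter, Nat.cast_sum, mul_sum,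
    Finset.sum_apply]
  refine sum_congr rfl fun b _ => ?_
  by_cases hT : T ⊆ X i <;> by_cases hb : b ∈ X i <;>
    simp [subsetIndicator, insert_subset_iff, hT, hb]

theorem subsetIndicator_mem_indicatorSpan {U T : Finset α} {d : ℕ} (hT : T ⊆ U)
    (hd : #T ≤ d) : subsetIndicator X T ∈ indicatorSpan (R := R) X U d :=
  Submodule.subset_span ⟨⟨T, mem_filter.mpr ⟨mem_powerset.mpr hT, hd⟩⟩, rfl⟩

theorem subsetIndicator_mul_prod_mem_indicatorSpan {κ : Type*} (P : κ → Finset α) (β : κ → R)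
    {U : Finset α} (hP : ∀ a, P a ⊆ U) {d : ℕ} (A : Finset κ) :
    ∀ T ⊆ U, #T + #A ≤ d → subsetIndicator X T *
      ∏ a ∈ A, (fun i => ((X i ∩ P a).card : R) - β a) ∈ indicatorSpan X U d := by
  classical
  induction A using Finset.induction_on with
  | empty =>
    intro T hT hd
    simpa using subsetIndicator_mem_indicatorSpan X hT hd
  | @insert a A ha ih =>
    intro T hT hd
    rw [card_insert_of_notMem ha] at hd
    have hsplit : subsetIndicator X T * (fun i => ((X i ∩ P a).card : R) - β a) =
        ∑ b ∈ P a, subsetIndicator X (insert b T) - β a • subsetIndicator X T := by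
      rw [← subsetIndicator_mul_card_inter]
      ext i
      simp only [Pi.mul_apply, Pi.sub_apply, Pi.smul_apply, smul_eq_mul]
      ring
    rw [prod_insert ha, ← mul_assoc, hsplit, sub_mul, sum_mul, smul_mul_assoc]
    refine Submodule.sub_mem _ (Submodule.sum_mem _ fun b hb => ih _ ?_ ?_)
      (Submodule.smul_mem _ _ (ih T hT (by omega)))
    · exact insert_subset (hP a hb) hT
    · have := card_insert_le b T
      omega

theorem prod_card_inter_sub_mem_indicatorSpan {κ : Type*} [Fintype κ] (P : κ → Finset α)
    (β : κ → R) {U : Finset α} (hP : ∀ a, P a ⊆ U) :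
    (fun i => ∏ a, (((X i ∩ P a).card : R) - β a)) ∈
      indicatorSpan X U (Fintype.card κ) := by
  have := subsetIndicator_mul_prod_mem_indicatorSpan X P β hP (d := Fintype.card κ) univ ∅
    (empty_subset U) (by simp)
  convert this using 1
  ext i
  simp [subsetIndicator, prod_apply]

theorem finrank_indicatorSpan_le {K : Type*} [Field K] (U : Finset α) (d : ℕ) :
    Module.finrank K (indicatorSpan (R := K) X U d) ≤
      ∑ h ∈ range (d + 1), U.card.choose h :=
  calc Module.finrank K (indicatorSpan (R := K) X U d)
      ≤ Fintype.card (U.powerset.filter (#· ≤ d)) := finrank_range_le_card _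
    _ = #(U.powerset.filter (#· ≤ d)) := Fintype.card_coe _
    _ = ∑ h ∈ range (d + 1), U.card.choose h := card_powerset_filter_card_le U d

end SubsetIndicator

theorem intersection_properties_bound_general (n m s : ℕ)
    (X : Fin m → Finset ℕ)
    (R : Fin m → Fin s → Finset ℕ × ℕ)
    (hRsub : ∀ i a, (R i a).1 ⊆ Finset.Icc 1 n)
    (h1 : ∀ i, ∀ a, (X i ∩ (R i a).1).card ≠ (R i a).2)
    (h2 : ∀ i j : Fin m, i < j → ∃ a, (X i ∩ (R j a).1).card = (R j a).2) :
    m ≤ ∑ h ∈ Finset.range (s + 1), n.choose h := by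
  let f : Fin m → Fin m → ℚ := fun j i => ∏ a, (((X i ∩ (R j a).1).card : ℚ) - (R j a).2)
  have hf : ∀ j, f j ∈ indicatorSpan X (Icc 1 n) s := fun j => by
    simpa only [Fintype.card_fin] using prod_card_inter_sub_mem_indicatorSpan X (fun a => (R j a).1)
      (fun a => ((R j a).2 : ℚ)) (hRsub j)
  have hindep : LinearIndependent ℚ f := by
    refine linearIndependent_of_triangular f (fun i => prod_ne_zero_iff.mpr fun a _ => ?_)
      fun i j hij => ?_
    · exact sub_ne_zero.mpr (Nat.cast_injective.ne (h1 i a))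
    · obtain ⟨a, ha⟩ := h2 i j hij
      exact prod_eq_zero (mem_univ a) (by simp [ha])
  have hindepSpan : LinearIndependent ℚ fun j => (⟨f j, hf j⟩ : indicatorSpan X (Icc 1 n) s) :=
    LinearIndependent.of_comp (Submodule.subtype _) hindep
  calc m = Fintype.card (Fin m) := (Fintype.card_fin m).symm
    _ ≤ Module.finrank ℚ (indicatorSpan X (Icc 1 n) s) := hindepSpan.fintype_card_le_finrank
    _ ≤ ∑ h ∈ range (s + 1), (Icc 1 n).card.choose h := finrank_indicatorSpan_le X _ s
    _ = ∑ h ∈ range (s + 1), n.choose h := by rw [Nat.card_Icc, Nat.add_sub_cancel]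

theorem intersection_properties_bound (n m s : ℕ)
    (F : Fin m → Finset ℕ) (hFinj : Function.Injective F)
    (hFsub : ∀ i, F i ⊆ Finset.Icc 1 n)
    (X : Fin m → Finset ℕ) (hXsub : ∀ i, X i ⊆ Finset.Icc 1 n)
    (R : Fin m → Fin s → Finset ℕ × ℕ)
    (hRsub : ∀ i a, (R i a).1 ⊆ Finset.Icc 1 n)
    (h1 : ∀ i, ∀ a, (X i ∩ (R i a).1).card ≠ (R i a).2)
    (h2 : ∀ i j : Fin m, i < j → ∃ a, (X i ∩ (R j a).1).card = (R j a).2) :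
    m ≤ ∑ h ∈ Finset.range (s + 1), n.choose h :=
  intersection_properties_bound_general n m s X R hRsub h1 h2
end

section
/- Let F ⊆ ([n] choose k) be a maximal non-trivial intersecting family with n ≥ 2k+1, let p be an element of maximum degree in F, F₀ = {F ∈ F : p ∉ F} = {F₁,...,F_x} with x ≥ 1, F₁' = {F ∈ F : p ∈ F}, and let S = {S ∈ ([n] choose k-1) : S ∉ ∂_{k-1}F₁', p ∉ S, and S ∩ F = ∅ for some F ∈ F₀}. Then S = ⋃_{i=1}^{x} ([n]∖(F_i ∪ {p}) choose k-1). -/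
open Finset

/-
A `(k-1)`-set `T` with `p ∉ T` that lies in a `k`-set `G ∋ p` forces `G = insert p T`. If `T` also
misses some `A ∈ F₀`, then so does `G`, contradicting that `F` is intersecting. Hence the condition
`T ∉ ∂_{k-1} F₁'` in the definition of `S` is automatic.
-/

/-- `F` is a non-trivial intersecting family: every two members meet and
no element lies in all members. -/
def NontrivIntersecting (F : Finset (Finset ℕ)) : Prop :=
  (∀ A ∈ F, ∀ B ∈ F, (A ∩ B).Nonempty) ∧ ¬ ∃ p, ∀ A ∈ F, p ∈ A

section

variable {α : Type*} [DecidableEq α]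

lemma eq_insert_of_subset_of_card_eq_succ {G T : Finset α} {p : α} (hpG : p ∈ G)
    (hTG : T ⊆ G) (hpT : p ∉ T) (hcard : G.card = T.card + 1) : G = insert p T :=
  (eq_of_subset_of_card_le (insert_subset hpG hTG)
    (by rw [card_insert_of_notMem hpT, hcard])).symm

lemma not_subset_of_disjoint_of_intersecting {F : Finset (Finset α)} {k : ℕ} (hk : 1 ≤ k)
    (hcard : ∀ G ∈ F, G.card = k) (hint : ∀ A ∈ F, ∀ B ∈ F, (A ∩ B).Nonempty)
    {A G T : Finset α} {p : α} (hA : A ∈ F) (hpA : p ∉ A) (hG : G ∈ F) (hpG : p ∈ G)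
    (hT : T.card = k - 1) (hpT : p ∉ T) (hTA : Disjoint T A) : ¬ T ⊆ G := by
  intro hTG
  have hGT : G = insert p T :=
    eq_insert_of_subset_of_card_eq_succ hpG hTG hpT (by rw [hcard G hG, hT]; omega)
  have hGA : Disjoint G A := hGT ▸ disjoint_insert_left.mpr ⟨hpA, hTA⟩
  exact (hint G hG A hA).ne_empty (disjoint_iff_inter_eq_empty.mp hGA)

end

theorem S_eq_union_of_complements_general (n k : ℕ) (hk : 2 ≤ k)
    (F : Finset (Finset ℕ))
    (hF : ∀ A ∈ F, A ∈ (Finset.Icc 1 n).powersetCard k)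
    (hnt : NontrivIntersecting F)
    (p : ℕ)
    (F0 : Finset (Finset ℕ)) (hF0 : F0 = F.filter (fun A => p ∉ A))
    (F1 : Finset (Finset ℕ)) (hF1 : F1 = F.filter (fun A => p ∈ A))
    (S : Finset (Finset ℕ))
    (hS : S = ((Finset.Icc 1 n).powersetCard (k - 1)).filter
      (fun T => (¬ ∃ G ∈ F1, T ⊆ G) ∧ p ∉ T ∧ ∃ A ∈ F0, T ∩ A = ∅)) :
    S = F0.biUnion (fun A => ((Finset.Icc 1 n \ insert p A).powersetCard (k - 1))) := by
  subst hS hF0 hF1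
  have hcard : ∀ G ∈ F, G.card = k := fun G hG => (mem_powersetCard.mp (hF G hG)).2
  ext T
  simp only [mem_filter, mem_biUnion, mem_powersetCard, subset_sdiff, disjoint_insert_right,
    ← disjoint_iff_inter_eq_empty]
  constructor
  · rintro ⟨⟨hTU, hT⟩, -, hpT, A, hA, hTA⟩
    exact ⟨A, hA, ⟨hTU, hpT, hTA⟩, hT⟩
  · rintro ⟨A, ⟨hA, hpA⟩, ⟨hTU, hpT, hTA⟩, hT⟩
    refine ⟨⟨hTU, hT⟩, ?_, hpT, A, ⟨hA, hpA⟩, hTA⟩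
    rintro ⟨G, ⟨hG, hpG⟩, hTG⟩
    exact not_subset_of_disjoint_of_intersecting (by omega) hcard hnt.1 hA hpA hG hpG hT hpT hTA
      hTG

theorem S_eq_union_of_complements (n k : ℕ) (hk : 2 ≤ k) (hn : 2 * k + 1 ≤ n)
    (F : Finset (Finset ℕ))
    (hF : ∀ A ∈ F, A ∈ (Finset.Icc 1 n).powersetCard k)
    (hnt : NontrivIntersecting F)
    (hmax : ∀ A ∈ (Finset.Icc 1 n).powersetCard k, A ∉ F →
      ¬ NontrivIntersecting (insert A F))
    (p : ℕ) (hp : p ∈ Finset.Icc 1 n)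
    (hpmax : ∀ q ∈ Finset.Icc 1 n,
      (F.filter (fun A => q ∈ A)).card ≤ (F.filter (fun A => p ∈ A)).card)
    (F0 : Finset (Finset ℕ)) (hF0 : F0 = F.filter (fun A => p ∉ A))
    (hF0ne : 1 ≤ F0.card)
    (F1 : Finset (Finset ℕ)) (hF1 : F1 = F.filter (fun A => p ∈ A))
    (S : Finset (Finset ℕ))
    (hS : S = ((Finset.Icc 1 n).powersetCard (k - 1)).filter
      (fun T => (¬ ∃ G ∈ F1, T ⊆ G) ∧ p ∉ T ∧ ∃ A ∈ F0, T ∩ A = ∅)) :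
    S = F0.biUnion (fun A => ((Finset.Icc 1 n \ insert p A).powersetCard (k - 1))) :=
  S_eq_union_of_complements_general n k hk F hF hnt p F0 hF0 F1 hF1 S hS
end

section
/- Let F₁,...,F_x be distinct k-subsets of [n]∖{p} for some p ∈ [n], with 1 ≤ x ≤ k and n ≥ 2k+1. Then |⋃_{i=1}^{x} ([n]∖(F_i ∪ {p}) choose k-1)| ≥ Σ_{j=1}^{x} C(n-k-j, k-j). -/
/-!
Order the sets as `F₁, …, F_x` and add them one at a time. When `F_j` is added, the
`(k-1)`-subsets of its complement that are new to the union include all those containing a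
transversal of `F₁, …, F_{j-1}` taken outside `F_j` (it exists because distinct `k`-sets are
incomparable): such a set meets every earlier `F_i`, so lies in no earlier complement. A
transversal has at most `j - 1` points, so at least `C(n-k-j, k-j)` sets are new.
-/

open Finset

variable {α : Type*} [DecidableEq α]

theorem Finset.choose_le_card_filter_powersetCard_subset {s t : Finset α} {j n : ℕ}
    (hst : s ⊆ t) (hsj : #s ≤ j) (hjn : j ≤ n) (hjt : j ≤ #t) :
    (#t - j).choose (n - j) ≤ #{u ∈ t.powersetCard n | s ⊆ u} := by
  obtain ⟨s', hss', hs't, rfl⟩ := exists_subsuperset_card_eq hst hsj hjt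
  rw [← card_filter_powersetCard_subset s' t n hs't hjn]
  exact card_le_card <| monotone_filter_right _ fun _ _ => hss'.trans

theorem Finset.exists_transversal_sdiff {U B : Finset α} {G : Finset (Finset α)}
    (hGU : ∀ A ∈ G, A ⊆ U) (hGB : ∀ A ∈ G, ¬ A ⊆ B) :
    ∃ T ⊆ U \ B, #T ≤ #G ∧ ∀ A ∈ G, ¬ Disjoint A T := by
  have hne : ∀ A ∈ G, (A \ B).Nonempty := fun A hA => sdiff_nonempty.2 (hGB A hA)
  choose t ht using hne
  refine ⟨G.attach.image fun A => t A.1 A.2, ?_, card_image_le.trans (card_attach).le,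
    fun A hA => ?_⟩
  · simp only [image_subset_iff]
    intro ⟨A, hA⟩ _
    have := mem_sdiff.1 (ht A hA)
    exact mem_sdiff.2 ⟨hGU A hA this.1, this.2⟩
  · exact not_disjoint_iff.2
      ⟨t A hA, (mem_sdiff.1 (ht A hA)).1, mem_image_of_mem _ (mem_attach G ⟨A, hA⟩)⟩

theorem Finset.notMem_biUnion_powersetCard_sdiff_of_subset {U s T : Finset α}
    {G : Finset (Finset α)} {r : ℕ} (hGT : ∀ A ∈ G, ¬ Disjoint A T) (hTs : T ⊆ s) :
    s ∉ G.biUnion fun A => (U \ A).powersetCard r := by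
  intro hs
  obtain ⟨A, hA, hsP⟩ := mem_biUnion.1 hs
  have hsA : Disjoint s A := disjoint_of_subset_left (mem_powersetCard.1 hsP).1 sdiff_disjoint
  exact hGT A hA (hsA.mono_left hTs).symm

theorem Finset.sum_choose_le_card_biUnion_powersetCard_sdiff {U : Finset α}
    {G : Finset (Finset α)} {k r : ℕ} (hG : G ⊆ U.powersetCard k) (hr : #G ≤ r + 1)
    (hU : #G + k ≤ #U + 1) :
    ∑ j ∈ range #G, (#U - k - j).choose (r - j) ≤
      #(G.biUnion fun A => (U \ A).powersetCard r) := by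
  induction G using Finset.induction_on with
  | empty => simp
  | insert B G hB ih =>
    obtain ⟨hB', hG⟩ := insert_subset_iff.1 hG
    obtain ⟨hBU, hBk⟩ := mem_powersetCard.1 hB'
    rw [card_insert_of_notMem hB] at hr hU ⊢
    have hGB : ∀ A ∈ G, ¬ A ⊆ B := fun A hA hAB =>
      hB (eq_of_subset_of_card_le hAB (by rw [hBk, (mem_powersetCard.1 (hG hA)).2]) ▸ hA)
    obtain ⟨T, hTsub, hTcard, hGT⟩ :=
      exists_transversal_sdiff (fun A hA => (mem_powersetCard.1 (hG hA)).1) hGB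
    set P := G.biUnion fun A => (U \ A).powersetCard r
    have hnew : {s ∈ (U \ B).powersetCard r | T ⊆ s} ⊆ (U \ B).powersetCard r \ P :=
      fun s hs => mem_sdiff.2 ⟨(mem_filter.1 hs).1,
        notMem_biUnion_powersetCard_sdiff_of_subset hGT (mem_filter.1 hs).2⟩
    have hcard : #(U \ B) = #U - k := by rw [card_sdiff_of_subset hBU, hBk]
    calc ∑ j ∈ range (#G + 1), (#U - k - j).choose (r - j)
        ≤ #P + #{s ∈ (U \ B).powersetCard r | T ⊆ s} := by
          rw [sum_range_succ]
          refine add_le_add (ih hG (by omega) (by omega)) ?_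
          rw [← hcard]
          exact choose_le_card_filter_powersetCard_subset hTsub hTcard (by omega) (by omega)
      _ ≤ #P + #((U \ B).powersetCard r \ P) := by gcongr
      _ = #((insert B G).biUnion fun A => (U \ A).powersetCard r) := by
          rw [biUnion_insert, add_comm, card_sdiff_add_card]

theorem union_complements_lower_bound_general (n k x p : ℕ)
    (hn : 2 * k + 1 ≤ n) (hp : p ∈ Finset.Icc 1 n)
    (hxk : x ≤ k)
    (G : Finset (Finset ℕ)) (hGcard : G.card = x)
    (hGsub : ∀ A ∈ G, A ⊆ Finset.Icc 1 n \ {p} ∧ A.card = k) :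
    ∑ j ∈ Finset.Icc 1 x, (n - k - j).choose (k - j) ≤
      (G.biUnion (fun A => (Finset.Icc 1 n \ insert p A).powersetCard (k - 1))).card := by
  set U := Icc 1 n \ {p}
  have hU : #U = n - 1 := by
    rw [card_sdiff_of_subset (singleton_subset_iff.2 hp), Nat.card_Icc, card_singleton]; rfl
  have hUA : ∀ A, U \ A = Icc 1 n \ insert p A := fun A => by
    rw [sdiff_sdiff_left, insert_eq]; rfl
  have hbound := sum_choose_le_card_biUnion_powersetCard_sdiff (r := k - 1)
    (fun A hA => mem_powersetCard.2 (hGsub A hA)) (by omega) (by omega)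
  simp only [hUA, hU, hGcard] at hbound
  refine le_trans (le_of_eq ?_) hbound
  rw [← Ico_add_one_right_eq_Icc, sum_Ico_eq_sum_range, Nat.add_sub_cancel]
  refine sum_congr rfl fun j _ => ?_
  congr 1 <;> omega

theorem union_complements_lower_bound (n k x p : ℕ) (hk : 1 ≤ k)
    (hn : 2 * k + 1 ≤ n) (hp : p ∈ Finset.Icc 1 n)
    (hx1 : 1 ≤ x) (hxk : x ≤ k)
    (G : Finset (Finset ℕ)) (hGcard : G.card = x)
    (hGsub : ∀ A ∈ G, A ⊆ Finset.Icc 1 n \ {p} ∧ A.card = k) :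
    ∑ j ∈ Finset.Icc 1 x, (n - k - j).choose (k - j) ≤
      (G.biUnion (fun A => (Finset.Icc 1 n \ insert p A).powersetCard (k - 1))).card :=
  union_complements_lower_bound_general n k x p hn hp hxk G hGcard hGsub
end

section
/- Let F₁,...,F_x be distinct k-subsets of [n]∖{p}, pairwise intersecting, with 1 ≤ x ≤ k and n ≥ 2k+1. Then |⋃_{i=1}^{x} ([n]∖(F_i ∪ {p}) choose k-1)| = Σ_{j=1}^{x} C(n-k-j, k-j) if and only if {F₁,...,F_x} forms a sunflower with k-1 common elements (i.e., there is a set A of size k-1 with F_i ∩ F_j = A for all i ≠ j). -/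
/-!
Write `V = [n] \ {p}` and `U(G)` for the family of `(k-1)`-subsets of `V` avoiding some member
of `G`. Adding a set `F` to a family `H` adds to `U` exactly the `(k-1)`-subsets of `V \ F` that
meet every member of `H`. Picking a point of `B \ F` for each `B ∈ H` gives a transversal `R` with
`|R| ≤ |H|`, and every `(k-1)`-subset of `V \ F` containing `R` is new; adding the members of `G`
one at a time, the `j`-th step therefore adds at least `C(n-k-j, k-j)`. For a sunflower with
`(k-1)`-element core the sets `B \ F` are distinct singletons, so these are all the new sets and
equality holds.

Conversely, equality for `G` forces equality for every subfamily and in every step. A pair `A, B`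
with `|A ∩ B| < k - 1` has two points in `A \ B`, so some new set misses the point forced by the
transversal; a triple with `c ∈ (A ∩ B) \ D` has the transversal `{c}` of `{A, B}`, which is too
small. Both make a step strictly larger than the bound, so all pairwise intersections have size
`k - 1` and `A ∩ B ⊆ D` for all `A ≠ B` and `D` in `G`, which forces a common core.
-/

open Finset

namespace Nat

theorem add_choose_le_add_choose (d : ℕ) {i j : ℕ} (h : i ≤ j) :
    (d + i).choose i ≤ (d + j).choose j := by
  rw [← choose_symm_add, ← choose_symm_add]
  exact choose_le_choose d (by omega)

theorem add_choose_lt_add_succ_choose_succ {d : ℕ} (hd : 0 < d) (i : ℕ) :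
    (d + i).choose i < (d + i + 1).choose (i + 1) := by
  rw [choose_succ_succ']
  have : 0 < (d + i).choose (i + 1) := choose_pos (by omega)
  omega

end Nat

variable {α : Type*} [DecidableEq α]

def avoidingSets (V : Finset α) (k : ℕ) (A : Finset α) : Finset (Finset α) :=
  (V \ A).powersetCard (k - 1)

def avoidingUnion (V : Finset α) (k : ℕ) (G : Finset (Finset α)) : Finset (Finset α) :=
  G.biUnion (avoidingSets V k)

/-- `N` is the size of the ground set `V = [n] \ {p}`, so `N + 1` is the paper's `n`. -/
def unionBound (N k s : ℕ) : ℕ :=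
  ∑ j ∈ Icc 1 s, (N + 1 - k - j).choose (k - j)

def IsSunflower (G : Finset (Finset α)) (C : Finset α) : Prop :=
  (G : Set (Finset α)).Pairwise fun A B => A ∩ B = C

/-- Equality in `unionBound_le_card_avoidingUnion`. -/
def IsTight (V : Finset α) (k : ℕ) (G : Finset (Finset α)) : Prop :=
  #(avoidingUnion V k G) = unionBound #V k #G

theorem unionBound_succ (N k s : ℕ) :
    unionBound N k (s + 1) = unionBound N k s + (N - k - s).choose (k - 1 - s) := by
  rw [unionBound, sum_Icc_succ_top (by omega), ← unionBound]
  congr 2 <;> omega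

section avoiding

variable {V F R : Finset α} {k : ℕ} {H : Finset (Finset α)}

theorem card_avoidingUnion_insert :
    #(avoidingUnion V k (insert F H))
      = #(avoidingUnion V k H) + #(avoidingSets V k F \ avoidingUnion V k H) := by
  rw [avoidingUnion, biUnion_insert, ← card_sdiff_add_card, add_comm, ← avoidingUnion]

theorem mem_sdiff_avoidingUnion {T : Finset α} :
    T ∈ avoidingSets V k F \ avoidingUnion V k H ↔
      T ∈ avoidingSets V k F ∧ ∀ B ∈ H, ¬Disjoint T B := by
  simp only [avoidingUnion, avoidingSets, mem_sdiff, mem_biUnion, mem_powersetCard,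
    subset_sdiff, not_exists, not_and]
  constructor
  · rintro ⟨⟨⟨hTV, hTF⟩, hT⟩, h⟩
    exact ⟨⟨⟨hTV, hTF⟩, hT⟩, fun B hB hTB => h B hB ⟨hTV, hTB⟩ hT⟩
  · rintro ⟨⟨⟨hTV, hTF⟩, hT⟩, h⟩
    exact ⟨⟨⟨hTV, hTF⟩, hT⟩, fun B hB hTB _ => h B hB hTB.2⟩

theorem filter_superset_subset_sdiff_avoidingUnion (hR : ∀ B ∈ H, ¬Disjoint R B) :
    (avoidingSets V k F).filter (R ⊆ ·) ⊆ avoidingSets V k F \ avoidingUnion V k H := by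
  intro T hT
  rw [mem_filter] at hT
  exact mem_sdiff_avoidingUnion.2 ⟨hT.1, fun B hB hTB => hR B hB (hTB.mono_left hT.2)⟩

theorem card_filter_superset_avoidingSets (hF : F ∈ V.powersetCard k) (hR : R ⊆ V \ F)
    (hRk : #R ≤ k - 1) :
    #((avoidingSets V k F).filter (R ⊆ ·)) = (#V - k - #R).choose (k - 1 - #R) := by
  rw [mem_powersetCard] at hF
  rw [avoidingSets, card_filter_powersetCard_subset _ _ _ hR hRk, card_sdiff_of_subset hF.1, hF.2]

theorem choose_le_card_sdiff_avoidingUnion_of_transversal (hF : F ∈ V.powersetCard k)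
    (hR : R ⊆ V \ F) (hRk : #R ≤ k - 1) (hRH : ∀ B ∈ H, ¬Disjoint R B) :
    (#V - k - #R).choose (k - 1 - #R) ≤ #(avoidingSets V k F \ avoidingUnion V k H) := by
  rw [← card_filter_superset_avoidingSets hF hR hRk]
  exact card_le_card (filter_superset_subset_sdiff_avoidingUnion hRH)

theorem exists_transversal (hH : ∀ B ∈ H, B ⊆ V ∧ ¬B ⊆ F) :
    ∃ R ⊆ V \ F, #R ≤ #H ∧ ∀ B ∈ H, ¬Disjoint R B := by
  induction H using Finset.induction_on with
  | empty => exact ⟨∅, empty_subset _, by simp, by simp⟩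
  | insert B H hBH ih =>
    obtain ⟨R, hRV, hRH, hR⟩ := ih fun B' hB' => hH B' (mem_insert_of_mem hB')
    obtain ⟨hBV, hBF⟩ := hH B (mem_insert_self B H)
    obtain ⟨b, hbB, hbF⟩ := not_subset.1 hBF
    refine ⟨insert b R, insert_subset (mem_sdiff.2 ⟨hBV hbB, hbF⟩) hRV, ?_, ?_⟩
    · rw [card_insert_of_notMem hBH]
      exact (card_insert_le b R).trans (by omega)
    · rw [forall_mem_insert]
      refine ⟨not_disjoint_iff.2 ⟨b, mem_insert_self b R, hbB⟩, fun B' hB' h => hR B' hB' ?_⟩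
      exact h.mono_left (subset_insert b R)

theorem choose_le_card_sdiff_avoidingUnion (hV : 2 * k ≤ #V + 1)
    (hG : insert F H ⊆ V.powersetCard k) (hFH : F ∉ H) (hHk : #H < k) :
    (#V - k - #H).choose (k - 1 - #H) ≤ #(avoidingSets V k F \ avoidingUnion V k H) := by
  rw [insert_subset_iff] at hG
  have hFk := (mem_powersetCard.1 hG.1).2
  obtain ⟨R, hRV, hRH, hR⟩ := exists_transversal (V := V) (F := F) fun B hB => by
    obtain ⟨hBV, hBk⟩ := mem_powersetCard.1 (hG.2 hB)
    exact ⟨hBV, fun hBF => hFH (eq_of_subset_of_card_le hBF (by omega) ▸ hB)⟩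
  calc (#V - k - #H).choose (k - 1 - #H)
      = (#V + 1 - 2 * k + (k - 1 - #H)).choose (k - 1 - #H) := by congr 1; omega
    _ ≤ (#V + 1 - 2 * k + (k - 1 - #R)).choose (k - 1 - #R) :=
        Nat.add_choose_le_add_choose _ (by omega)
    _ = (#V - k - #R).choose (k - 1 - #R) := by congr 1; omega
    _ ≤ _ := choose_le_card_sdiff_avoidingUnion_of_transversal hG.1 hRV (by omega) hR

end avoiding

section tight

variable {V : Finset α} {k : ℕ}

theorem unionBound_le_card_avoidingUnion (hV : 2 * k ≤ #V + 1) {G : Finset (Finset α)}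
    (hG : G ⊆ V.powersetCard k) (hGk : #G ≤ k) :
    unionBound #V k #G ≤ #(avoidingUnion V k G) := by
  induction G using Finset.induction_on with
  | empty => simp [unionBound]
  | insert F H hFH ih =>
    rw [card_insert_of_notMem hFH] at hGk ⊢
    rw [unionBound_succ, card_avoidingUnion_insert]
    exact add_le_add (ih ((subset_insert F H).trans hG) (by omega))
      (choose_le_card_sdiff_avoidingUnion hV hG hFH (by omega))

theorem IsTight.of_insert {F : Finset α} {H : Finset (Finset α)} (hV : 2 * k ≤ #V + 1)
    (hG : insert F H ⊆ V.powersetCard k) (hFH : F ∉ H) (hHk : #H < k)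
    (h : IsTight V k (insert F H)) :
    IsTight V k H ∧
      #(avoidingSets V k F \ avoidingUnion V k H) = (#V - k - #H).choose (k - 1 - #H) := by
  have hH := unionBound_le_card_avoidingUnion hV ((subset_insert F H).trans hG) hHk.le
  have hF := choose_le_card_sdiff_avoidingUnion hV hG hFH hHk
  rw [IsTight, card_insert_of_notMem hFH, unionBound_succ, card_avoidingUnion_insert] at h
  exact ⟨by rw [IsTight]; omega, by omega⟩

theorem IsTight.mono {G H : Finset (Finset α)} (hV : 2 * k ≤ #V + 1)
    (hG : G ⊆ V.powersetCard k) (hGk : #G ≤ k) (h : IsTight V k G) (hHG : H ⊆ G) :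
    IsTight V k H := by
  induction G using Finset.strongInduction with
  | H G ih =>
    obtain rfl | hHG' := hHG.eq_or_ssubset
    · exact h
    obtain ⟨F, hFG, hFH⟩ := exists_of_ssubset hHG'
    have hG' : insert F (G.erase F) ⊆ V.powersetCard k := by rwa [insert_erase hFG]
    have hcard := card_erase_add_one hFG
    refine ih (G.erase F) (erase_ssubset hFG) (erase_subset F G |>.trans hG) (by omega) ?_
      (subset_erase.2 ⟨hHG, hFH⟩)
    refine (IsTight.of_insert hV hG' (notMem_erase F G) (by omega) ?_).1
    rwa [insert_erase hFG]

theorem IsTight.card_sdiff_avoidingUnion {G H : Finset (Finset α)} {F : Finset α}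
    (hV : 2 * k ≤ #V + 1) (hG : G ⊆ V.powersetCard k) (hGk : #G ≤ k) (h : IsTight V k G)
    (hFHG : insert F H ⊆ G) (hFH : F ∉ H) :
    #(avoidingSets V k F \ avoidingUnion V k H) = (#V - k - #H).choose (k - 1 - #H) := by
  have hcard := card_le_card hFHG
  rw [card_insert_of_notMem hFH] at hcard
  exact (IsTight.of_insert hV (hFHG.trans hG) hFH (by omega) (h.mono hV hG hGk hFHG)).2

end tight

section sunflower

variable {V : Finset α} {k : ℕ}

theorem sdiff_avoidingUnion_eq_filter {F : Finset α} {H : Finset (Finset α)}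
    (hH : ∀ B ∈ H, #(B \ F) = 1) :
    avoidingSets V k F \ avoidingUnion V k H
      = (avoidingSets V k F).filter (H.biUnion (· \ F) ⊆ ·) := by
  ext T
  rw [mem_sdiff_avoidingUnion, mem_filter, biUnion_subset]
  refine and_congr_right fun hT => forall₂_congr fun B hB => ?_
  obtain ⟨b, hb⟩ := card_eq_one.1 (hH B hB)
  have hTF : Disjoint T F := (subset_sdiff.1 (mem_powersetCard.1 hT).1).2
  have hbB : b ∈ B ∧ b ∉ F := mem_sdiff.1 (hb ▸ mem_singleton_self b)
  rw [hb, singleton_subset_iff, not_disjoint_iff]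
  constructor
  · rintro ⟨c, hcT, hcB⟩
    have hc : c ∈ B \ F := mem_sdiff.2 ⟨hcB, disjoint_left.1 hTF hcT⟩
    rw [hb, mem_singleton] at hc
    exact hc ▸ hcT
  · exact fun hbT => ⟨b, hbT, hbB.1⟩

theorem card_sdiff_avoidingUnion_of_isSunflower {F C : Finset α} {H : Finset (Finset α)}
    (hG : insert F H ⊆ V.powersetCard k) (hFH : F ∉ H) (hHk : #H < k) (hC : #C = k - 1)
    (hsun : IsSunflower (insert F H) C) :
    #(avoidingSets V k F \ avoidingUnion V k H) = (#V - k - #H).choose (k - 1 - #H) := by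
  rw [insert_subset_iff] at hG
  have hFB : ∀ B ∈ H, F ∩ B = C := fun B hB =>
    hsun (mem_insert_self F H) (mem_insert_of_mem hB) (ne_of_mem_of_not_mem hB hFH).symm
  have hpetal : ∀ B ∈ H, #(B \ F) = 1 := fun B hB => by
    rw [Finset.card_sdiff, hFB B hB, (mem_powersetCard.1 (hG.2 hB)).2, hC]
    omega
  have hdisj : (H : Set (Finset α)).PairwiseDisjoint (· \ F) := fun B hB B' hB' hBB' => by
    refine disjoint_left.2 fun b hb hb' => (mem_sdiff.1 hb).2 ?_
    have hbC : b ∈ C := hsun (mem_insert_of_mem hB) (mem_insert_of_mem hB') hBB' ▸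
      mem_inter.2 ⟨(mem_sdiff.1 hb).1, (mem_sdiff.1 hb').1⟩
    exact mem_of_mem_inter_left (hFB B hB ▸ hbC)
  have hR : #(H.biUnion (· \ F)) = #H := by
    rw [card_biUnion hdisj, sum_congr rfl hpetal, sum_const, smul_eq_mul, mul_one]
  have hRV : H.biUnion (· \ F) ⊆ V \ F := biUnion_subset.2 fun B hB =>
    sdiff_subset_sdiff (mem_powersetCard.1 (hG.2 hB)).1 subset_rfl
  rw [sdiff_avoidingUnion_eq_filter hpetal, card_filter_superset_avoidingSets hG.1 hRV (by omega),
    hR]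

theorem isTight_of_isSunflower {G : Finset (Finset α)} {C : Finset α}
    (hG : G ⊆ V.powersetCard k) (hGk : #G ≤ k) (hC : #C = k - 1) (hsun : IsSunflower G C) :
    IsTight V k G := by
  induction G using Finset.induction_on with
  | empty => simp [IsTight, avoidingUnion, unionBound]
  | insert F H hFH ih =>
    rw [card_insert_of_notMem hFH] at hGk
    have hH : IsTight V k H :=
      ih ((subset_insert F H).trans hG) (by omega) (Set.Pairwise.mono (by simp) hsun)
    rw [IsTight, card_insert_of_notMem hFH, unionBound_succ, card_avoidingUnion_insert, hH,
      card_sdiff_avoidingUnion_of_isSunflower hG hFH (by omega) hC hsun]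

theorem isSunflower_of_inter_subset {G : Finset (Finset α)} {A₀ B₀ : Finset α}
    (h : ∀ A ∈ G, ∀ B ∈ G, A ≠ B → ∀ D ∈ G, A ∩ B ⊆ D) (hA₀ : A₀ ∈ G) (hB₀ : B₀ ∈ G)
    (hA₀B₀ : A₀ ≠ B₀) : IsSunflower G (A₀ ∩ B₀) := fun A hA B hB hAB =>
  Subset.antisymm (subset_inter (h A hA B hB hAB A₀ hA₀) (h A hA B hB hAB B₀ hB₀))
    (subset_inter (h A₀ hA₀ B₀ hB₀ hA₀B₀ A hA) (h A₀ hA₀ B₀ hB₀ hA₀B₀ B hB))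

end sunflower

section forward

variable {V : Finset α} {k : ℕ}

theorem choose_lt_card_sdiff_avoidingUnion_singleton {A B : Finset α} {a a' : α} (hV : 2 * k ≤ #V)
    (hk : 2 ≤ k) (hA : A ⊆ V) (hB : B ∈ V.powersetCard k) (ha : a ∈ A \ B) (ha' : a' ∈ A \ B)
    (haa' : a ≠ a') :
    (#V - k - 1).choose (k - 2) < #(avoidingSets V k B \ avoidingUnion V k {A}) := by
  obtain ⟨haA, haB⟩ := mem_sdiff.1 ha
  obtain ⟨ha'A, ha'B⟩ := mem_sdiff.1 ha'
  have hBV := (mem_powersetCard.1 hB).1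
  have hRV : {a} ⊆ V \ B := singleton_subset_iff.2 (mem_sdiff.2 ⟨hA haA, haB⟩)
  have hsub := filter_superset_subset_sdiff_avoidingUnion (V := V) (k := k) (F := B)
    (H := {A}) (R := {a}) (by simpa using haA)
  have hcard := card_filter_superset_avoidingSets hB hRV (by rw [card_singleton]; omega)
  have hVB : #((V \ B).erase a) = #V - k - 1 := by
    rw [card_erase_of_mem (hRV (mem_singleton_self a)), card_sdiff_of_subset hBV,
      (mem_powersetCard.1 hB).2]
  obtain ⟨T, ha'T, hTV, hT⟩ := exists_subsuperset_card_eq (n := k - 1)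
    (singleton_subset_iff.2 (mem_erase.2 ⟨haa'.symm, mem_sdiff.2 ⟨hA ha'A, ha'B⟩⟩))
    (by rw [card_singleton]; omega) (by omega)
  have hTN : T ∈ avoidingSets V k B \ avoidingUnion V k {A} := by
    refine mem_sdiff_avoidingUnion.2 ⟨mem_powersetCard.2 ⟨hTV.trans (erase_subset a _), hT⟩, ?_⟩
    simpa using not_disjoint_iff.2 ⟨a', singleton_subset_iff.1 ha'T, ha'A⟩
  have haT : T ∉ (avoidingSets V k B).filter ({a} ⊆ ·) := fun h =>
    notMem_erase a _ (hTV (singleton_subset_iff.1 (mem_filter.1 h).2))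
  rw [card_singleton, show k - 1 - 1 = k - 2 by omega] at hcard
  exact hcard ▸ card_lt_card ((ssubset_iff_of_subset hsub).2 ⟨T, hTN, haT⟩)

theorem IsTight.card_inter {G : Finset (Finset α)} (hV : 2 * k ≤ #V)
    (hG : G ⊆ V.powersetCard k) (hGk : #G ≤ k) (h : IsTight V k G) {A B : Finset α}
    (hA : A ∈ G) (hB : B ∈ G) (hAB : A ≠ B) : #(A ∩ B) = k - 1 := by
  obtain ⟨hAV, hAk⟩ := mem_powersetCard.1 (hG hA)
  have hBk := (mem_powersetCard.1 (hG hB)).2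
  by_contra hne
  have hlt : #(A ∩ B) < k := by
    refine (card_le_card inter_subset_left |>.trans hAk.le).lt_of_ne fun hk => hAB ?_
    rw [← eq_of_subset_of_card_le (inter_subset_left : A ∩ B ⊆ A) (by omega),
      eq_of_subset_of_card_le (inter_subset_right : A ∩ B ⊆ B) (by omega)]
  have hAB2 : 1 < #(A \ B) := by
    rw [Finset.card_sdiff, inter_comm]
    omega
  obtain ⟨a, ha, a', ha', haa'⟩ := one_lt_card.1 hAB2
  have heq := h.card_sdiff_avoidingUnion (by omega) hG hGk
    (insert_subset hB (singleton_subset_iff.2 hA)) (notMem_singleton.2 hAB.symm)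
  rw [card_singleton, show k - 1 - 1 = k - 2 by omega] at heq
  have := choose_lt_card_sdiff_avoidingUnion_singleton hV (by omega) hAV (hG hB) ha ha' haa'
  omega

theorem IsTight.inter_subset {G : Finset (Finset α)} (hV : 2 * k ≤ #V)
    (hG : G ⊆ V.powersetCard k) (hGk : #G ≤ k) (h : IsTight V k G) {A B D : Finset α}
    (hA : A ∈ G) (hB : B ∈ G) (hD : D ∈ G) (hAB : A ≠ B) : A ∩ B ⊆ D := by
  intro c hc
  by_contra hcD
  obtain ⟨hcA, hcB⟩ := mem_inter.1 hc
  have hDAB : D ∉ ({A, B} : Finset (Finset α)) := by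
    simp only [mem_insert, mem_singleton, not_or]
    exact ⟨fun e => hcD (e ▸ hcA), fun e => hcD (e ▸ hcB)⟩
  have hsub : insert D {A, B} ⊆ G := by
    simp only [insert_subset_iff, singleton_subset_iff]
    exact ⟨hD, hA, hB⟩
  have hk : 3 ≤ k := by
    have := card_le_card hsub
    rw [card_insert_of_notMem hDAB, card_pair hAB] at this
    omega
  have heq := h.card_sdiff_avoidingUnion (by omega) hG hGk hsub hDAB
  have hlow := choose_le_card_sdiff_avoidingUnion_of_transversal (H := {A, B}) (hG hD)
    (singleton_subset_iff.2 (mem_sdiff.2 ⟨(mem_powersetCard.1 (hG hA)).1 hcA, hcD⟩))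
    (by rw [card_singleton]; omega) (by simp [hcA, hcB])
  have hlt : (#V - k - 2).choose (k - 1 - 2) < (#V - k - 1).choose (k - 1 - 1) := by
    convert Nat.add_choose_lt_add_succ_choose_succ (d := #V + 1 - 2 * k) (by omega) (k - 3)
      using 2 <;> omega
  rw [card_pair hAB] at heq
  rw [card_singleton] at hlow
  omega

theorem isTight_iff_exists_isSunflower {G : Finset (Finset α)} (hV : 2 * k ≤ #V)
    (hG : G ⊆ V.powersetCard k) (hGk : #G ≤ k) :
    IsTight V k G ↔ ∃ C, #C = k - 1 ∧ IsSunflower G C := by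
  refine ⟨fun h => ?_, fun ⟨C, hC, hsun⟩ => isTight_of_isSunflower hG hGk hC hsun⟩
  rcases le_or_gt #G 1 with hG1 | hG1
  · obtain ⟨C, -, hC⟩ := exists_subset_card_eq (show k - 1 ≤ #V by omega)
    exact ⟨C, hC, fun A hA B hB hAB => absurd (card_le_one.1 hG1 A hA B hB) hAB⟩
  · obtain ⟨A, hA, B, hB, hAB⟩ := one_lt_card.1 hG1
    refine ⟨A ∩ B, h.card_inter hV hG hGk hA hB hAB, isSunflower_of_inter_subset ?_ hA hB hAB⟩
    exact fun A hA B hB hAB D hD => h.inter_subset hV hG hGk hA hB hD hAB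

end forward

theorem union_complements_eq_iff_sunflower_general (n k x p : ℕ)
    (hn : 2 * k + 1 ≤ n) (hp : p ∈ Finset.Icc 1 n)
    (hxk : x ≤ k)
    (G : Finset (Finset ℕ)) (hGcard : G.card = x)
    (hGsub : ∀ A ∈ G, A ⊆ Finset.Icc 1 n \ {p} ∧ A.card = k) :
    (G.biUnion (fun A => (Finset.Icc 1 n \ insert p A).powersetCard (k - 1))).card =
        ∑ j ∈ Finset.Icc 1 x, (n - k - j).choose (k - j) ↔
      ∃ C : Finset ℕ, C.card = k - 1 ∧
        ∀ A ∈ G, ∀ B ∈ G, A ≠ B → A ∩ B = C := by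
  set V := Icc 1 n \ {p}
  have hV : #V + 1 = n := by
    rw [card_sdiff_of_subset (singleton_subset_iff.2 hp), card_singleton, Nat.card_Icc]
    omega
  have hU : G.biUnion (fun A => (Icc 1 n \ insert p A).powersetCard (k - 1))
      = avoidingUnion V k G := by
    rw [avoidingUnion]
    congr 1
    funext A
    rw [avoidingSets, sdiff_sdiff_left, insert_eq]
    rfl
  rw [hU, ← hGcard, ← hV]
  exact isTight_iff_exists_isSunflower (by omega) (fun A hA => mem_powersetCard.2 (hGsub A hA))
    (hGcard ▸ hxk)

theorem union_complements_eq_iff_sunflower (n k x p : ℕ) (hk : 1 ≤ k)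
    (hn : 2 * k + 1 ≤ n) (hp : p ∈ Finset.Icc 1 n)
    (hx1 : 1 ≤ x) (hxk : x ≤ k)
    (G : Finset (Finset ℕ)) (hGcard : G.card = x)
    (hGsub : ∀ A ∈ G, A ⊆ Finset.Icc 1 n \ {p} ∧ A.card = k)
    (hGint : ∀ A ∈ G, ∀ B ∈ G, (A ∩ B).Nonempty) :
    (G.biUnion (fun A => (Finset.Icc 1 n \ insert p A).powersetCard (k - 1))).card =
        ∑ j ∈ Finset.Icc 1 x, (n - k - j).choose (k - j) ↔
      ∃ C : Finset ℕ, C.card = k - 1 ∧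
        ∀ A ∈ G, ∀ B ∈ G, A ≠ B → A ∩ B = C :=
  union_complements_eq_iff_sunflower_general n k x p hn hp hxk G hGcard hGsub
end

section
/- Let F₁,...,F_x be distinct pairwise-intersecting k-subsets of [n]∖{p} with 1 ≤ x ≤ k and n ≥ 2k+1. If {F₁,...,F_x} is not a sunflower with k-1 common elements, then |⋃_{i=1}^{x} ([n]∖(F_i ∪ {p}) choose k-1)| ≥ Σ_{j=1}^{x} C(n-k-j, k-j) + C(n-k-3, k-2). -/
/-!
Write `Y = [n] \ {p}` and `𝒞(A)` for the `(k-1)`-subsets of `Y \ A`. Adding a set `B` to a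
family `H` enlarges `⋃ 𝒞(A)` at least by the `(k-1)`-subsets of `Y \ B` containing a set
`S ⊆ Y \ B` that meets every member of `H`; one point of each `A \ B` gives `|S| ≤ |H|`, so the
`j`-th set added contributes at least `C(n-k-j, k-j)`.

The extra term comes from the first two or three sets. If every `Z ∩ X` with `X ≠ Z` is
independent of `X`, all pairwise intersections coincide, so not being a sunflower forces two sets
meeting in at most `k - 2` points, and inclusion–exclusion on their two families gives it.
Otherwise `Z ∩ X ≠ Z ∩ W` for some `Z, X, W`; with `a ∈ Z \ X` and `b ∈ (Z ∩ X) \ W`, the sets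
`X` and `W` each contribute `C(n-k-2, k-2)` through `S = {a}` and `S = {b}`, which by Pascal's rule
beats the greedy bound by `C(n-k-3, k-2)`.
-/

open Finset

theorem Nat.choose_sub_le_choose_sub {M r s t : ℕ} (hst : s ≤ t) (htr : t ≤ r) (hrM : r ≤ M) :
    (M - t).choose (r - t) ≤ (M - s).choose (r - s) := by
  rw [Nat.choose_symm_of_eq_add (show M - t = (r - t) + (M - r) by omega),
    Nat.choose_symm_of_eq_add (show M - s = (r - s) + (M - r) by omega)]
  exact Nat.choose_le_choose _ (by omega)

section

variable {α : Type*}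

theorem not_subset_of_ne_of_card_eq {A B : Finset α} (hAB : A ≠ B) (hcard : #A = #B) :
    ¬A ⊆ B :=
  fun h => hAB (eq_of_subset_of_card_le h hcard.ge)

variable [DecidableEq α]

theorem card_inter_lt_of_ne_of_card_eq {A B : Finset α} (hAB : A ≠ B) (hcard : #A = #B) :
    #(A ∩ B) < #A :=
  card_lt_card ⟨inter_subset_left,
    fun h => not_subset_of_ne_of_card_eq hAB hcard (h.trans inter_subset_right)⟩

theorem exists_subset_card_le_forall_not_disjoint {U : Finset α} (H : Finset (Finset α))
    (hH : ∀ A ∈ H, ¬Disjoint A U) : ∃ S ⊆ U, #S ≤ #H ∧ ∀ A ∈ H, ¬Disjoint S A := by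
  induction H using Finset.induction_on with
  | empty => exact ⟨∅, empty_subset _, by simp, by simp⟩
  | insert A H hAH ih =>
    obtain ⟨S, hSU, hSH, hS⟩ := ih fun A' hA' => hH A' (mem_insert_of_mem hA')
    obtain ⟨a, haA, haU⟩ := not_disjoint_iff.mp (hH A (mem_insert_self A H))
    refine ⟨insert a S, insert_subset haU hSU, ?_, ?_⟩
    · rw [card_insert_of_notMem hAH]
      exact (card_insert_le a S).trans (by omega)
    · rw [forall_mem_insert]
      refine ⟨not_disjoint_iff.mpr ⟨a, mem_insert_self a S, haA⟩, fun A' hA' hd => ?_⟩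
      exact hS A' hA' (disjoint_of_subset_left (subset_insert a S) hd)

theorem inter_eq_inter_of_forall_inter_eq_inter {G : Finset (Finset α)}
    (hG : ∀ Z ∈ G, ∀ X ∈ G, ∀ W ∈ G, Z ≠ X → Z ≠ W → Z ∩ X = Z ∩ W)
    {A B C D : Finset α} (hA : A ∈ G) (hB : B ∈ G) (hC : C ∈ G) (hD : D ∈ G)
    (hAB : A ≠ B) (hCD : C ≠ D) : A ∩ B = C ∩ D := by
  by_cases hAC : A = C
  · subst hAC; exact hG A hA B hB D hD hAB hCD
  · rw [hG A hA B hB C hC hAB hAC, inter_comm, hG C hC A hA D hD (Ne.symm hAC) hCD]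

theorem add_choose_le_card_biUnion_insert (Y : Finset α) (r : ℕ) {B S : Finset α}
    {H : Finset (Finset α)}
    (hS : S ⊆ Y \ B) (hSr : #S ≤ r) (hSH : ∀ A ∈ H, ¬Disjoint S A) :
    #(H.biUnion fun A => (Y \ A).powersetCard r) + (#(Y \ B) - #S).choose (r - #S) ≤
      #((insert B H).biUnion fun A => (Y \ A).powersetCard r) := by
  set N := {T ∈ (Y \ B).powersetCard r | S ⊆ T}
  have hN : Disjoint N (H.biUnion fun A => (Y \ A).powersetCard r) := by
    simp only [disjoint_left, N, mem_filter, mem_biUnion, mem_powersetCard, not_exists, not_and]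
    intro T ⟨_, hST⟩ A hA hTA _
    exact hSH A hA (disjoint_of_subset_left hST (subset_sdiff.mp hTA).2)
  calc _ = #(N ∪ H.biUnion fun A => (Y \ A).powersetCard r) := by
        rw [card_union_of_disjoint hN, card_filter_powersetCard_subset _ _ _ hS hSr, add_comm]
    _ ≤ _ := card_le_card <| by
        rw [biUnion_insert]; exact union_subset_union_left (filter_subset _ _)

theorem add_choose_le_card_biUnion_insert_of_card_eq (Y : Finset α) (r : ℕ) {k : ℕ}
    {B : Finset α} {H : Finset (Finset α)} (hH : ∀ A ∈ H, A ⊆ Y ∧ #A = k) (hB : B ⊆ Y)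
    (hBk : #B = k) (hBH : B ∉ H) (hHr : #H ≤ r) (hrY : r ≤ #Y - k) :
    #(H.biUnion fun A => (Y \ A).powersetCard r) + (#Y - k - #H).choose (r - #H) ≤
      #((insert B H).biUnion fun A => (Y \ A).powersetCard r) := by
  have hHB : ∀ A ∈ H, ¬Disjoint A (Y \ B) := fun A hA hd =>
    not_subset_of_ne_of_card_eq (ne_of_mem_of_not_mem hA hBH) ((hH A hA).2.trans hBk.symm)
      fun a ha => by_contra fun hb => disjoint_left.mp hd ha (mem_sdiff.mpr ⟨(hH A hA).1 ha, hb⟩)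
  obtain ⟨S, hSB, hSH, hS⟩ := exists_subset_card_le_forall_not_disjoint H hHB
  have hYB : #(Y \ B) = #Y - k := by rw [card_sdiff_of_subset hB, hBk]
  calc _ ≤ #(H.biUnion fun A => (Y \ A).powersetCard r) +
          (#(Y \ B) - #S).choose (r - #S) := by
        rw [hYB]; gcongr; exact Nat.choose_sub_le_choose_sub hSH hHr hrY
    _ ≤ _ := add_choose_le_card_biUnion_insert Y r hSB (hSH.trans hHr) hS

theorem add_sum_le_card_biUnion_union (Y : Finset α) (r : ℕ) {k : ℕ} {P R : Finset (Finset α)}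
    (hPR : Disjoint P R) (hPRY : ∀ A ∈ P ∪ R, A ⊆ Y ∧ #A = k) (hcard : #P + #R ≤ r + 1)
    (hrY : r ≤ #Y - k) :
    #(P.biUnion fun A => (Y \ A).powersetCard r) +
        ∑ j ∈ Ico #P (#P + #R), (#Y - k - j).choose (r - j) ≤
      #((P ∪ R).biUnion fun A => (Y \ A).powersetCard r) := by
  induction R using Finset.induction_on with
  | empty => simp
  | insert B R hBR ih =>
    rw [disjoint_insert_right] at hPR
    rw [card_insert_of_notMem hBR] at hcard ⊢
    have hPRY' : ∀ A ∈ P ∪ R, A ⊆ Y ∧ #A = k := fun A hA =>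
      hPRY A (union_subset_union_right (subset_insert B R) hA)
    have hBY := hPRY B (mem_union_right P (mem_insert_self B R))
    have hB : B ∉ P ∪ R := by simp [hPR.1, hBR]
    have hcardPR : #(P ∪ R) = #P + #R := card_union_of_disjoint hPR.2
    have hstep := add_choose_le_card_biUnion_insert_of_card_eq Y r hPRY' hBY.1 hBY.2 hB
      (by omega) hrY
    rw [hcardPR] at hstep
    have := ih hPR.2 hPRY' (by omega)
    rw [← add_assoc, sum_Ico_succ_top (Nat.le_add_right _ _), union_insert]
    omega

theorem le_card_biUnion_pair (Y : Finset α) (r : ℕ) {k : ℕ} {A B : Finset α} (hA : A ⊆ Y)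
    (hAk : #A = k) (hB : B ⊆ Y) (hBk : #B = k) (hAB : #(A ∩ B) + 2 ≤ k) (hr : 1 ≤ r) :
    (#Y - k).choose r + (#Y - k - 1).choose (r - 1) + (#Y - k - 2).choose (r - 1) ≤
      #(({A, B} : Finset (Finset α)).biUnion fun A => (Y \ A).powersetCard r) := by
  rw [biUnion_insert, singleton_biUnion]
  have hinter : (Y \ A).powersetCard r ∩ (Y \ B).powersetCard r =
      (Y \ (A ∪ B)).powersetCard r := by
    ext T; simp only [mem_inter, mem_powersetCard, subset_sdiff, disjoint_union_right]; tauto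
  have hunion : k + 2 ≤ #(A ∪ B) := by have := card_union_add_card_inter A B; omega
  have hunionY : #(A ∪ B) ≤ #Y := card_le_card (union_subset hA hB)
  have hinter_le : #((Y \ A).powersetCard r ∩ (Y \ B).powersetCard r) ≤
      (#Y - k - 2).choose r := by
    rw [hinter, card_powersetCard, card_sdiff_of_subset (union_subset hA hB)]
    exact Nat.choose_le_choose _ (by omega)
  have hincl_excl := card_union_add_card_inter ((Y \ A).powersetCard r) ((Y \ B).powersetCard r)
  rw [card_powersetCard, card_powersetCard, card_sdiff_of_subset hA, card_sdiff_of_subset hB,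
    hAk, hBk] at hincl_excl
  have hpascal₁ : (#Y - k).choose r = (#Y - k - 1).choose (r - 1) + (#Y - k - 1).choose r :=
    Nat.choose_eq_choose_pred_add (by omega) hr
  have hpascal₂ : (#Y - k - 1).choose r = (#Y - k - 2).choose (r - 1) + (#Y - k - 2).choose r :=
    Nat.choose_eq_choose_pred_add (by omega) hr
  omega

theorem le_card_biUnion_triple (Y : Finset α) (r : ℕ) {k : ℕ} {Z X W : Finset α} {a b : α}
    (hZ : Z ⊆ Y) (hZk : #Z = k) (hX : X ⊆ Y) (hXk : #X = k) (hW : W ⊆ Y) (hWk : #W = k)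
    (haZ : a ∈ Z) (haX : a ∉ X) (hbZ : b ∈ Z) (hbX : b ∈ X) (hbW : b ∉ W) (hr : 1 ≤ r) :
    (#Y - k).choose r + 2 * (#Y - k - 1).choose (r - 1) ≤
      #(({W, X, Z} : Finset (Finset α)).biUnion fun A => (Y \ A).powersetCard r) := by
  have hX_new := add_choose_le_card_biUnion_insert Y r (B := X) (H := {Z})
    (singleton_subset_iff.mpr (mem_sdiff.mpr ⟨hZ haZ, haX⟩)) (by simpa using hr)
    (by simpa using haZ)
  have hW_new := add_choose_le_card_biUnion_insert Y r (B := W) (H := {X, Z})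
    (singleton_subset_iff.mpr (mem_sdiff.mpr ⟨hZ hbZ, hbW⟩)) (by simpa using hr)
    (by simp [hbX, hbZ])
  rw [singleton_biUnion, card_powersetCard, card_sdiff_of_subset hZ, card_sdiff_of_subset hX,
    card_singleton, hZk, hXk] at hX_new
  rw [card_sdiff_of_subset hW, card_singleton, hWk] at hW_new
  omega

theorem sum_add_le_card_biUnion_of_subset (Y : Finset α) (r : ℕ) {k c : ℕ}
    {P G : Finset (Finset α)} (hPG : P ⊆ G) (hG : ∀ A ∈ G, A ⊆ Y ∧ #A = k) (hGr : #G ≤ r + 1)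
    (hrY : r ≤ #Y - k)
    (hP : ∑ j ∈ range #P, (#Y - k - j).choose (r - j) + c ≤
      #(P.biUnion fun A => (Y \ A).powersetCard r)) :
    ∑ j ∈ range #G, (#Y - k - j).choose (r - j) + c ≤
      #(G.biUnion fun A => (Y \ A).powersetCard r) := by
  have hcard : #P + #(G \ P) = #G := by rw [add_comm, card_sdiff_add_card_eq_card hPG]
  have htail := add_sum_le_card_biUnion_union Y r disjoint_sdiff
    (by rwa [union_sdiff_of_subset hPG]) (by omega) hrY
  rw [union_sdiff_of_subset hPG, hcard] at htail
  rw [← sum_range_add_sum_Ico _ (card_le_card hPG)]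
  omega

theorem sum_add_le_card_biUnion_of_card_inter_le (Y : Finset α) (r : ℕ) {k : ℕ}
    {G : Finset (Finset α)} {A B : Finset α} (hG : ∀ A ∈ G, A ⊆ Y ∧ #A = k)
    (hGr : #G ≤ r + 1) (hrY : r ≤ #Y - k) (hr : 1 ≤ r) (hA : A ∈ G) (hB : B ∈ G)
    (hAB : #(A ∩ B) + 2 ≤ k) :
    ∑ j ∈ range #G, (#Y - k - j).choose (r - j) + (#Y - k - 2).choose (r - 1) ≤
      #(G.biUnion fun A => (Y \ A).powersetCard r) := by
  have hne : A ≠ B := by rintro rfl; rw [inter_self, (hG A hA).2] at hAB; omega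
  refine sum_add_le_card_biUnion_of_subset Y r (P := {A, B}) (insert_subset hA
    (singleton_subset_iff.mpr hB)) hG hGr hrY ?_
  rw [card_pair hne, sum_range_succ, sum_range_one]
  exact le_card_biUnion_pair Y r (hG A hA).1 (hG A hA).2 (hG B hB).1 (hG B hB).2 hAB hr

theorem sum_add_le_card_biUnion_of_inter_ne (Y : Finset α) (r : ℕ) {k : ℕ}
    {G : Finset (Finset α)} {Z X W : Finset α} (hG : ∀ A ∈ G, A ⊆ Y ∧ #A = k)
    (hGr : #G ≤ r + 1) (hrY : r ≤ #Y - k) (hZ : Z ∈ G) (hX : X ∈ G) (hW : W ∈ G)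
    (hZX : Z ≠ X) (hZW : Z ≠ W) (hinter : Z ∩ X ≠ Z ∩ W) :
    ∑ j ∈ range #G, (#Y - k - j).choose (r - j) + (#Y - k - 2).choose (r - 1) ≤
      #(G.biUnion fun A => (Y \ A).powersetCard r) := by
  wlog hsub : ¬Z ∩ X ⊆ Z ∩ W generalizing X W
  · exact this hW hX hZW hZX hinter.symm fun h => hinter (subset_antisymm (not_not.mp hsub) h)
  obtain ⟨b, hbZX, hbZW⟩ := not_subset.mp hsub
  obtain ⟨a, haZ, haX⟩ := not_subset.mp
    (not_subset_of_ne_of_card_eq hZX ((hG Z hZ).2.trans (hG X hX).2.symm))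
  have hbW : b ∉ W := fun hbW => hbZW (mem_inter.mpr ⟨(mem_inter.mp hbZX).1, hbW⟩)
  have hXW : X ≠ W := by rintro rfl; exact hinter rfl
  have hcard : #({W, X, Z} : Finset (Finset α)) = 3 := by
    rw [card_insert_of_notMem (by simp [hXW.symm, hZW.symm]), card_pair hZX.symm]
  have hPG : ({W, X, Z} : Finset (Finset α)) ⊆ G := by
    simp [insert_subset_iff, hW, hX, hZ]
  have hr : 2 ≤ r := by have := card_le_card hPG; omega
  refine sum_add_le_card_biUnion_of_subset Y r hPG hG hGr hrY ?_
  have htriple := le_card_biUnion_triple Y r (hG Z hZ).1 (hG Z hZ).2 (hG X hX).1 (hG X hX).2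
    (hG W hW).1 (hG W hW).2 haZ haX (mem_inter.mp hbZX).1 (mem_inter.mp hbZX).2 hbW (by omega)
  have hpascal : (#Y - k - 1).choose (r - 1) =
      (#Y - k - 2).choose (r - 2) + (#Y - k - 2).choose (r - 1) :=
    Nat.choose_eq_choose_pred_add (by omega) (by omega)
  rw [hcard, sum_range_succ, sum_range_succ, sum_range_one]
  simp only [Nat.sub_zero]
  omega

end

theorem union_complements_not_sunflower_general (n k x p : ℕ)
    (hn : 2 * k + 1 ≤ n) (hp : p ∈ Finset.Icc 1 n)
    (hxk : x ≤ k)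
    (G : Finset (Finset ℕ)) (hGcard : G.card = x)
    (hGsub : ∀ A ∈ G, A ⊆ Finset.Icc 1 n \ {p} ∧ A.card = k)
    (hnotsun : ¬ ∃ C : Finset ℕ, C.card = k - 1 ∧
      ∀ A ∈ G, ∀ B ∈ G, A ≠ B → A ∩ B = C) :
    (∑ j ∈ Finset.Icc 1 x, (n - k - j).choose (k - j)) + (n - k - 3).choose (k - 2) ≤
      (G.biUnion (fun A => (Finset.Icc 1 n \ insert p A).powersetCard (k - 1))).card := by
  set Y := Icc 1 n \ {p}
  have hY : #Y = n - 1 := by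
    rw [card_sdiff_of_subset (singleton_subset_iff.mpr hp), Nat.card_Icc, card_singleton,
      Nat.add_sub_cancel]
  have hfamily : (fun A => (Icc 1 n \ insert p A).powersetCard (k - 1)) =
      fun A => (Y \ A).powersetCard (k - 1) := by
    funext A; rw [sdiff_sdiff_left, insert_eq]; rfl
  have hsum : ∑ j ∈ Icc 1 x, (n - k - j).choose (k - j) =
      ∑ j ∈ range #G, (#Y - k - j).choose (k - 1 - j) := by
    rw [← Ico_add_one_right_eq_Icc, sum_Ico_eq_sum_range, hGcard, Nat.add_sub_cancel]
    exact sum_congr rfl fun j _ => by rw [hY]; congr 1 <;> omega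
  have hx2 : 2 ≤ x := by
    by_contra! hx
    exact hnotsun ⟨range (k - 1), card_range _, fun A hA B hB hAB =>
      absurd (card_le_one.mp (by omega) A hA B hB) hAB⟩
  have hrY : k - 1 ≤ #Y - k := by omega
  rw [hfamily, hsum, show n - k - 3 = #Y - k - 2 by omega, show k - 2 = k - 1 - 1 by omega]
  by_cases hloc : ∀ Z ∈ G, ∀ X ∈ G, ∀ W ∈ G, Z ≠ X → Z ≠ W → Z ∩ X = Z ∩ W
  · obtain ⟨A, hA, B, hB, hAB⟩ := one_lt_card.mp (by omega : 1 < #G)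
    have hlt : #(A ∩ B) < k := (hGsub A hA).2 ▸
      card_inter_lt_of_ne_of_card_eq hAB ((hGsub A hA).2.trans (hGsub B hB).2.symm)
    have hne : #(A ∩ B) ≠ k - 1 := fun h => hnotsun ⟨A ∩ B, h, fun C hC D hD hCD =>
      inter_eq_inter_of_forall_inter_eq_inter hloc hC hD hA hB hCD hAB⟩
    exact sum_add_le_card_biUnion_of_card_inter_le Y (k - 1) hGsub (by omega) hrY (by omega)
      hA hB (by omega)
  · push Not at hloc
    obtain ⟨Z, hZ, X, hX, W, hW, hZX, hZW, hne⟩ := hloc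
    exact sum_add_le_card_biUnion_of_inter_ne Y (k - 1) hGsub (by omega) hrY hZ hX hW hZX hZW hne

theorem union_complements_not_sunflower (n k x p : ℕ) (hk : 1 ≤ k)
    (hn : 2 * k + 1 ≤ n) (hp : p ∈ Finset.Icc 1 n)
    (hx1 : 1 ≤ x) (hxk : x ≤ k)
    (G : Finset (Finset ℕ)) (hGcard : G.card = x)
    (hGsub : ∀ A ∈ G, A ⊆ Finset.Icc 1 n \ {p} ∧ A.card = k)
    (hGint : ∀ A ∈ G, ∀ B ∈ G, (A ∩ B).Nonempty)
    (hnotsun : ¬ ∃ C : Finset ℕ, C.card = k - 1 ∧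
      ∀ A ∈ G, ∀ B ∈ G, A ≠ B → A ∩ B = C) :
    (∑ j ∈ Finset.Icc 1 x, (n - k - j).choose (k - j)) + (n - k - 3).choose (k - 2) ≤
      (G.biUnion (fun A => (Finset.Icc 1 n \ insert p A).powersetCard (k - 1))).card :=
  union_complements_not_sunflower_general n k x p hn hp hxk G hGcard hGsub hnotsun
end

section
/- Define g(x) = Σ_{j=1}^{x} C(n-k-j, k-j) for 1 ≤ x ≤ k and g(x) = Σ_{j=1}^{k} C(n-k-j, k-j) for k+1 ≤ x ≤ n-k, and f(x) = g(x) - x. Then f is monotonically increasing on [1,k] and monotonically decreasing on [k, n-k], and f(n-k) - f(t) = C(n-k-t, k-t-1) - (n-k-t) for 1 ≤ t ≤ k. -/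
/-!
For `j ≤ k ≤ n - k` every term `C(n-k-j, k-j)` is at least `1`, so `g` grows at least as fast as
`x` up to `k` and is constant from `k` on. The difference `g k - g t` is a hockey-stick sum.
-/

open Finset

/-- Binomial coefficient on integers, with `C(a,b) = 0` for `b < 0`. -/
def intChoose (a b : ℤ) : ℤ := if 0 ≤ b then ((a.toNat).choose b.toNat : ℤ) else 0

theorem intChoose_natCast (a b : ℕ) : intChoose a b = a.choose b := by
  simp [intChoose]

theorem intChoose_of_neg (a : ℤ) {b : ℤ} (hb : b < 0) : intChoose a b = 0 :=
  if_neg hb.not_ge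

theorem Nat.one_le_choose_sub {N k j : ℕ} (hkN : k ≤ N) : 1 ≤ (N - j).choose (k - j) :=
  Nat.choose_pos (by omega)

/-- The hockey-stick identity read along the diagonal `j ↦ (N - j, k - j)`. -/
theorem Nat.sum_Ioc_choose_sub {N k t : ℕ} (hkN : k ≤ N) (htk : t < k) :
    ∑ j ∈ Ioc t k, (N - j).choose (k - j) = (N - t).choose (k - t - 1) := by
  have reindex : ∑ j ∈ Ioc t k, (N - j).choose (k - j)
      = ∑ i ∈ range (k - t - 1 + 1), (i + (N - k)).choose (N - k) := by
    refine sum_nbij' (fun j => k - j) (fun i => k - i) ?_ ?_ ?_ ?_ ?_ <;>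
      simp only [mem_Ioc, mem_range]
    · omega
    · omega
    · intro j hj; omega
    · intro i hi; omega
    · intro j hj
      rw [show N - j = (k - j) + (N - k) by omega, Nat.choose_symm_add]
  rw [reindex, Nat.sum_range_add_choose, show k - t - 1 + (N - k) + 1 = N - t by omega]
  exact Nat.choose_symm_of_eq_add (by omega)

theorem sum_Ioc_choose_sub_eq_intChoose {N k t : ℕ} (hkN : k ≤ N) (htk : t ≤ k) :
    ∑ j ∈ Ioc t k, ((N - j).choose (k - j) : ℤ) = intChoose ((N : ℤ) - t) ((k : ℤ) - t - 1) := by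
  rcases htk.eq_or_lt with rfl | htk
  · simp [intChoose_of_neg]
  · rw [← Nat.cast_sum, Nat.sum_Ioc_choose_sub hkN htk,
      show (N : ℤ) - t = ((N - t : ℕ) : ℤ) by omega,
      show (k : ℤ) - t - 1 = ((k - t - 1 : ℕ) : ℤ) by omega, intChoose_natCast]

theorem sum_Icc_one_sub_self (a : ℕ → ℤ) (x : ℕ) :
    ∑ j ∈ Icc 1 x, a j - x = ∑ j ∈ Icc 1 x, (a j - 1) := by
  simp [sum_sub_distrib]

theorem f_monotone_and_difference_general (n k : ℕ) (hn : 2 * k + 1 ≤ n)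
    (g : ℕ → ℤ)
    (hg : ∀ x, g x = ∑ j ∈ Finset.Icc 1 (min x k), ((n - k - j).choose (k - j) : ℤ))
    (f : ℕ → ℤ) (hf : ∀ x, f x = g x - x) :
    (∀ x y : ℕ, 1 ≤ x → x ≤ y → y ≤ k → f x ≤ f y) ∧
    (∀ x y : ℕ, k ≤ x → x ≤ y → y ≤ n - k → f y ≤ f x) ∧
    (∀ t : ℕ, 1 ≤ t → t ≤ k →
      f (n - k) - f t = intChoose ((n : ℤ) - k - t) ((k : ℤ) - t - 1) - ((n : ℤ) - k - t)) := by
  have hkN : k ≤ n - k := by omega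
  have hf_le : ∀ x ≤ k, f x = ∑ j ∈ Icc 1 x, (((n - k - j).choose (k - j) : ℤ) - 1) := by
    intro x hx
    rw [hf, hg, min_eq_left hx, sum_Icc_one_sub_self]
  have hg_ge : ∀ x, k ≤ x → g x = g k := by
    intro x hx
    rw [hg, hg, min_eq_right hx, min_self]
  refine ⟨fun x y _ hxy hy => ?_, fun x y hx hxy _ => ?_, fun t _ ht => ?_⟩
  · rw [hf_le x (hxy.trans hy), hf_le y hy]
    refine sum_le_sum_of_subset_of_nonneg (Icc_subset_Icc_right hxy) fun j _ _ => ?_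
    exact sub_nonneg.2 (by exact_mod_cast Nat.one_le_choose_sub hkN)
  · rw [hf, hf, hg_ge y (hx.trans hxy), hg_ge x hx]
    linarith [(Nat.cast_le (α := ℤ)).2 hxy]
  · have hsplit : g k = g t + ∑ j ∈ Ioc t k, ((n - k - j).choose (k - j) : ℤ) := by
      rw [hg, hg, min_self, min_eq_left ht]
      exact (sum_Ioc_consecutive _ t.zero_le ht).symm
    rw [hf, hf, hg_ge _ hkN, hsplit, sum_Ioc_choose_sub_eq_intChoose hkN ht,
      Nat.cast_sub (by omega : k ≤ n)]
    ring

theorem f_monotone_and_difference (n k : ℕ) (hk : 1 ≤ k) (hn : 2 * k + 1 ≤ n)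
    (g : ℕ → ℤ)
    (hg : ∀ x, g x = ∑ j ∈ Finset.Icc 1 (min x k), ((n - k - j).choose (k - j) : ℤ))
    (f : ℕ → ℤ) (hf : ∀ x, f x = g x - x) :
    (∀ x y : ℕ, 1 ≤ x → x ≤ y → y ≤ k → f x ≤ f y) ∧
    (∀ x y : ℕ, k ≤ x → x ≤ y → y ≤ n - k → f y ≤ f x) ∧
    (∀ t : ℕ, 1 ≤ t → t ≤ k →
      f (n - k) - f t = intChoose ((n : ℤ) - k - t) ((k : ℤ) - t - 1) - ((n : ℤ) - k - t)) :=
  f_monotone_and_difference_general n k hn g hg f hf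
end

section
/- With f as above and h(t) = min_{t ≤ x ≤ n-k} f(x): if k ≥ t+3 then h(t) = f(t) < min_{x ≠ t} f(x); if k = t+2 then h(t) = f(t) = f(n-k) < min_{x ∉ {t, n-k}} f(x); if k ≤ t+1 then h(t) = f(n-k) < min_{x ≠ n-k} f(x). -/
open Finset

/-! On `[0, k - 1]` the function `f` increases strictly, since each step adds `C(m, r) - 1` with
`0 < r < m`; the step from `k - 1` to `k` adds `C(n - 2k, 0) - 1 = 0`, and from `k` on `g` is
constant, so `f` drops by one per step. The two last summands `C(n - 2k + 1, 1) = n - 2k + 1` and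
`1` of `g k` give `f (n - k) = f (k - 2)`, and comparing `t` with `k - 2` yields the three cases. -/

theorem Nat.one_lt_choose {m r : ℕ} (hr0 : 0 < r) (hrm : r < m) : 1 < m.choose r :=
  calc 1 < r + 1 := by omega
    _ = (r + 1).choose r := (Nat.choose_succ_self_right r).symm
    _ ≤ m.choose r := Nat.choose_le_choose r hrm

/-- The paper's `g`; `chooseGap n k` below is its `f = g - id`. -/
def chooseSum (n k x : ℕ) : ℤ := ∑ j ∈ Icc 1 (min x k), ((n - k - j).choose (k - j) : ℤ)

def chooseGap (n k x : ℕ) : ℤ := chooseSum n k x - x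

section

variable {n k x : ℕ}

theorem chooseSum_of_le (hx : k ≤ x) : chooseSum n k x = chooseSum n k k := by
  rw [chooseSum, chooseSum, min_eq_right hx, min_self]

theorem chooseSum_succ (hx : x < k) :
    chooseSum n k (x + 1) = chooseSum n k x + (n - k - (x + 1)).choose (k - (x + 1)) := by
  rw [chooseSum, chooseSum, min_eq_left hx, min_eq_left hx.le, sum_Icc_succ_top (by omega)]

theorem chooseGap_succ (hx : x < k) :
    chooseGap n k (x + 1) = chooseGap n k x + (n - k - (x + 1)).choose (k - (x + 1)) - 1 := by
  rw [chooseGap, chooseGap, chooseSum_succ hx]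
  push_cast
  ring

theorem chooseGap_of_le (hx : k ≤ x) : chooseGap n k x = chooseSum n k k - x := by
  rw [chooseGap, chooseSum_of_le hx]

theorem chooseGap_strictAntiOn : StrictAntiOn (chooseGap n k) (Set.Ici k) := by
  intro x hx y hy hxy
  rw [chooseGap_of_le hx, chooseGap_of_le hy]
  omega

theorem chooseGap_strictMonoOn (hn : 2 * k < n) :
    StrictMonoOn (chooseGap n k) (Set.Iic (k - 1)) := by
  refine strictMonoOn_Iic_of_lt_succ fun x hx => ?_
  rw [Order.succ_eq_add_one, chooseGap_succ (by omega)]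
  have : 1 < (n - k - (x + 1)).choose (k - (x + 1)) := Nat.one_lt_choose (by omega) (by omega)
  omega

theorem chooseGap_pred_eq (hk : 1 ≤ k) : chooseGap n k (k - 1) = chooseGap n k k := by
  obtain ⟨m, rfl⟩ : ∃ m, k = m + 1 := ⟨k - 1, by omega⟩
  rw [chooseGap_succ (Nat.lt_succ_self m)]
  simp

theorem chooseGap_sub_eq (hk : 2 ≤ k) (hn : 2 * k ≤ n) :
    chooseGap n k (n - k) = chooseGap n k (k - 2) := by
  obtain ⟨m, rfl⟩ : ∃ m, k = m + 2 := ⟨k - 2, by omega⟩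
  obtain ⟨d, rfl⟩ := Nat.exists_eq_add_of_le hn
  have hsub : 2 * (m + 2) + d - (m + 2) = m + 2 + d := by omega
  have hflat := chooseGap_pred_eq (n := 2 * (m + 2) + d) (k := m + 2) (by omega)
  have hstep := chooseGap_succ (n := 2 * (m + 2) + d) (by omega : m < m + 2)
  rw [hsub, show m + 2 + d - (m + 1) = d + 1 by omega, show m + 2 - (m + 1) = 1 by omega,
    Nat.choose_one_right] at hstep
  have hk := chooseGap_of_le (n := 2 * (m + 2) + d) (le_refl (m + 2))
  rw [hsub, chooseGap_of_le (by omega), Nat.add_sub_cancel]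
  push_cast at hstep hflat hk ⊢
  omega

theorem chooseGap_sub_lt (hn : 2 * k < n) (hx1 : k - 1 ≤ x) (hx2 : x < n - k) :
    chooseGap n k (n - k) < chooseGap n k x := by
  have hlt : chooseGap n k (n - k) < chooseGap n k k :=
    chooseGap_strictAntiOn (le_refl k) (by simp; omega) (by omega)
  rcases (by omega : k ≤ x ∨ (1 ≤ k ∧ x = k - 1)) with hx | ⟨hk, rfl⟩
  · exact chooseGap_strictAntiOn hx (by simp; omega) hx2
  · rwa [chooseGap_pred_eq hk]

end

theorem h_min_cases_general (n k t : ℕ) (hn : 2 * k + 1 ≤ n)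
    (g : ℕ → ℤ)
    (hg : ∀ x, g x = ∑ j ∈ Finset.Icc 1 (min x k), ((n - k - j).choose (k - j) : ℤ))
    (f : ℕ → ℤ) (hf : ∀ x, f x = g x - x) :
    (t + 3 ≤ k → ∀ x : ℕ, t ≤ x → x ≤ n - k → x ≠ t → f t < f x) ∧
    (k = t + 2 → f t = f (n - k) ∧
      ∀ x : ℕ, t ≤ x → x ≤ n - k → x ≠ t → x ≠ n - k → f t < f x) ∧
    (k ≤ t + 1 → ∀ x : ℕ, t ≤ x → x ≤ n - k → x ≠ n - k → f (n - k) < f x) := by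
  obtain rfl : f = chooseGap n k := funext fun x => by rw [hf, hg]; rfl
  have hmono := chooseGap_strictMonoOn hn
  refine ⟨fun hkt x hxt hxn hx => ?_, fun hkt => ⟨?_, fun x hxt hxn hx hx' => ?_⟩,
    fun _ x hxt hxn hx => chooseGap_sub_lt hn (by omega) (by omega)⟩
  · rcases le_or_gt x (k - 1) with hxk | hxk
    · exact hmono (show t ≤ k - 1 by omega) hxk (by omega)
    calc chooseGap n k t < chooseGap n k (k - 2) :=
          hmono (show t ≤ k - 1 by omega) (show k - 2 ≤ k - 1 by omega) (by omega)
      _ = chooseGap n k (n - k) := (chooseGap_sub_eq (by omega) (by omega)).symm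
      _ ≤ chooseGap n k x := by
          rcases hxn.eq_or_lt with rfl | hxn
          · rfl
          · exact (chooseGap_sub_lt hn (by omega) hxn).le
  · rw [chooseGap_sub_eq (by omega) (by omega), show k - 2 = t by omega]
  · rcases le_or_gt x (k - 1) with hxk | hxk
    · exact hmono (show t ≤ k - 1 by omega) hxk (by omega)
    rw [show t = k - 2 by omega, ← chooseGap_sub_eq (by omega) (by omega)]
    exact chooseGap_sub_lt hn (by omega) (by omega)

theorem h_min_cases (n k t : ℕ) (hk : 1 ≤ k) (hn : 2 * k + 1 ≤ n)
    (ht1 : 1 ≤ t) (ht2 : t ≤ n - k)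
    (g : ℕ → ℤ)
    (hg : ∀ x, g x = ∑ j ∈ Finset.Icc 1 (min x k), ((n - k - j).choose (k - j) : ℤ))
    (f : ℕ → ℤ) (hf : ∀ x, f x = g x - x) :
    (t + 3 ≤ k → ∀ x : ℕ, t ≤ x → x ≤ n - k → x ≠ t → f t < f x) ∧
    (k = t + 2 → f t = f (n - k) ∧
      ∀ x : ℕ, t ≤ x → x ≤ n - k → x ≠ t → x ≠ n - k → f t < f x) ∧
    (k ≤ t + 1 → ∀ x : ℕ, t ≤ x → x ≤ n - k → x ≠ n - k → f (n - k) < f x) :=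
  h_min_cases_general n k t hn g hg f hf
end

section
/- Let n ≥ 7 and let F ⊆ ([n] choose 3) be a maximal non-trivial intersecting 3-uniform family with maximum-degree element p, and suppose |F₀| ≥ n−2 where F₀ = {F ∈ F : p ∉ F}. Then ⋂_{F∈F₀} F = ∅. -/
/-!
If every member of `F₀` contained `g`, then `g ≠ p` and `deg g = |F₀| + |{A : p, g ∈ A}|`, so
`deg g ≤ deg p` leaves at least `|F₀| ≥ n - 2` members through `p` avoiding `g`. Deleting `p` from
these and `g` from the members of `F₀` gives two cross-intersecting graphs on the `n - 2` points
other than `p` and `g`. By Erdős–Ko–Rado the first graph, having at least `n - 2 ≥ 4` edges, has two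
disjoint edges; every edge of the second graph joins them, so `|F₀| ≤ 4 < n - 2`.
-/

open Finset

namespace Finset

variable {α : Type*} [DecidableEq α]

theorem erdos_ko_rado_of_subset_powersetCard {s : Finset α} {𝒜 : Finset (Finset α)} {r : ℕ}
    (h𝒜s : 𝒜 ⊆ s.powersetCard r) (h𝒜 : (𝒜 : Set (Finset α)).Intersecting) (hr : r ≤ #s / 2) :
    #𝒜 ≤ (#s - 1).choose (r - 1) := by
  set j : Fin #s ↪ α := s.equivFin.symm.toEmbedding.trans (Function.Embedding.subtype _)
  have hj : univ.map j = s := by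
    ext a
    simp only [mem_map, mem_univ, true_and]
    exact ⟨by rintro ⟨i, rfl⟩; exact (s.equivFin.symm i).2,
      fun ha => ⟨s.equivFin ⟨a, ha⟩, by simp [j]⟩⟩
  set ℬ := univ.filter fun B : Finset (Fin #s) => B.map j ∈ 𝒜
  have hℬ : ℬ.map (mapEmbedding j).toEmbedding = 𝒜 := by
    ext A
    simp only [mem_map, mem_filter, mem_univ, true_and, RelEmbedding.coe_toEmbedding,
      mapEmbedding_apply, ℬ]
    refine ⟨by rintro ⟨B, hB, rfl⟩; exact hB, fun hA => ?_⟩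
    obtain ⟨B, -, rfl⟩ := subset_map_iff.1 (hj ▸ (mem_powersetCard.1 (h𝒜s hA)).1)
    exact ⟨B, hA, rfl⟩
  rw [← hℬ, card_map]
  refine erdos_ko_rado (fun B hB C hC hBC => ?_) (fun B hB => ?_) hr
  · exact h𝒜 (mem_filter.1 hB).2 (mem_filter.1 hC).2 ((disjoint_map j).2 hBC)
  · simpa using (mem_powersetCard.1 (h𝒜s (mem_filter.1 hB).2)).2

theorem card_le_mul_of_forall_inter_nonempty {ℋ : Finset (Finset α)} {e₁ e₂ : Finset α}
    (he : Disjoint e₁ e₂) (hℋ : ∀ B ∈ ℋ, #B = 2 ∧ (e₁ ∩ B).Nonempty ∧ (e₂ ∩ B).Nonempty) :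
    #ℋ ≤ #e₁ * #e₂ := by
  calc #ℋ ≤ #((e₁ ×ˢ e₂).image fun q => {q.1, q.2}) := card_le_card fun B hB => ?_
    _ ≤ #e₁ * #e₂ := card_image_le.trans_eq (card_product _ _)
  obtain ⟨hB2, ⟨x, hx⟩, ⟨y, hy⟩⟩ := hℋ B hB
  rw [mem_inter] at hx hy
  have hxy : x ≠ y := fun h => disjoint_left.1 he hx.1 (h ▸ hy.1)
  refine mem_image.2 ⟨(x, y), mem_product.2 ⟨hx.1, hy.1⟩, ?_⟩
  exact eq_of_subset_of_card_le (insert_subset hx.2 (singleton_subset_iff.2 hy.2))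
    (by rw [hB2, card_pair hxy])

theorem card_le_four_of_crossIntersecting {s : Finset α} {𝒢 ℋ : Finset (Finset α)}
    (h𝒢 : 𝒢 ⊆ s.powersetCard 2) (hℋ : (ℋ : Set (Finset α)).Sized 2) (hs : 4 ≤ #s)
    (h𝒢s : #s ≤ #𝒢) (hcross : ∀ A ∈ 𝒢, ∀ B ∈ ℋ, (A ∩ B).Nonempty) : #ℋ ≤ 4 := by
  have h𝒢int : ¬ (𝒢 : Set (Finset α)).Intersecting := fun h => by
    have := erdos_ko_rado_of_subset_powersetCard h𝒢 h (by omega)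
    rw [Nat.choose_one_right] at this
    omega
  obtain ⟨e₁, he₁, e₂, he₂, he⟩ : ∃ e₁ ∈ 𝒢, ∃ e₂ ∈ 𝒢, Disjoint e₁ e₂ := by
    simpa [Set.Intersecting] using h𝒢int
  have := card_le_mul_of_forall_inter_nonempty he
    fun B hB => ⟨hℋ hB, hcross _ he₁ B hB, hcross _ he₂ B hB⟩
  rwa [(mem_powersetCard.1 (h𝒢 he₁)).2, (mem_powersetCard.1 (h𝒢 he₂)).2] at this

theorem card_image_erase_of_forall_mem {𝒜 : Finset (Finset α)} {a : α} (h : ∀ A ∈ 𝒜, a ∈ A) :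
    #(𝒜.image (·.erase a)) = #𝒜 :=
  card_image_of_injOn fun A hA B hB => erase_injOn' a (h A hA) (h B hB)

theorem erase_mem_powersetCard_erase {U A : Finset α} {a b : α} {k : ℕ}
    (hA : A ∈ U.powersetCard (k + 1)) (ha : a ∈ A) (hb : b ∉ A) :
    A.erase a ∈ ((U.erase a).erase b).powersetCard k := by
  rw [mem_powersetCard] at hA ⊢
  refine ⟨fun x hx => ?_, by rw [card_erase_of_mem ha, hA.2, Nat.add_sub_cancel]⟩
  obtain ⟨hxa, hxA⟩ := mem_erase.1 hx
  exact mem_erase.2 ⟨ne_of_mem_of_not_mem hxA hb, mem_erase.2 ⟨hxa, hA.1 hxA⟩⟩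

theorem erase_inter_erase_of_notMem {A B : Finset α} {a b : α} (hbA : b ∉ A) (haB : a ∉ B) :
    A.erase a ∩ B.erase b = A ∩ B := by
  ext x
  simp only [mem_inter, mem_erase]
  exact ⟨fun h => ⟨h.1.2, h.2.2⟩,
    fun h => ⟨⟨ne_of_mem_of_not_mem h.2 haB, h.1⟩, ⟨ne_of_mem_of_not_mem h.1 hbA, h.2⟩⟩⟩

theorem card_filter_notMem_le {𝒜 : Finset (Finset α)} {p g : α}
    (hg : ∀ A ∈ 𝒜, p ∉ A → g ∈ A) (hdeg : #{A ∈ 𝒜 | g ∈ A} ≤ #{A ∈ 𝒜 | p ∈ A}) :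
    #{A ∈ 𝒜 | p ∉ A} ≤ #{A ∈ 𝒜 | p ∈ A ∧ g ∉ A} := by
  have hdeg_g : #{A ∈ 𝒜 | g ∈ A} = #{A ∈ 𝒜 | g ∈ A ∧ p ∈ A} + #{A ∈ 𝒜 | p ∉ A} := by
    rw [← card_filter_add_card_filter_not (s := {A ∈ 𝒜 | g ∈ A}) (fun A => p ∈ A),
      filter_filter, filter_filter]
    congr 2
    exact filter_congr fun A hA => ⟨And.right, fun hpA => ⟨hg A hA hpA, hpA⟩⟩
  have hdeg_p : #{A ∈ 𝒜 | p ∈ A} = #{A ∈ 𝒜 | g ∈ A ∧ p ∈ A} + #{A ∈ 𝒜 | p ∈ A ∧ g ∉ A} := by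
    rw [← card_filter_add_card_filter_not (s := {A ∈ 𝒜 | p ∈ A}) (fun A => g ∈ A),
      filter_filter, filter_filter, add_left_inj]
    exact congrArg card (filter_congr fun A _ => and_comm)
  omega

theorem card_le_four_of_crossIntersecting_triples {U : Finset α} {𝒯 ℱ : Finset (Finset α)}
    {p g : α} (hp : p ∈ U) (hg : g ∈ U) (hpg : p ≠ g) (hU : 6 ≤ #U)
    (h𝒯 : ∀ A ∈ 𝒯, A ∈ U.powersetCard 3 ∧ p ∈ A ∧ g ∉ A)
    (hℱ : ∀ B ∈ ℱ, B ∈ U.powersetCard 3 ∧ g ∈ B ∧ p ∉ B)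
    (h𝒯card : #U - 2 ≤ #𝒯) (hcross : ∀ A ∈ 𝒯, ∀ B ∈ ℱ, (A ∩ B).Nonempty) : #ℱ ≤ 4 := by
  have hs : #((U.erase p).erase g) = #U - 2 := by
    rw [card_erase_of_mem (mem_erase.2 ⟨hpg.symm, hg⟩), card_erase_of_mem hp, Nat.sub_sub]
  have hlinks := card_le_four_of_crossIntersecting (s := (U.erase p).erase g)
    (𝒢 := 𝒯.image (·.erase p)) (ℋ := ℱ.image (·.erase g))
    (image_subset_iff.2 fun A hA => erase_mem_powersetCard_erase (h𝒯 A hA).1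
      (h𝒯 A hA).2.1 (h𝒯 A hA).2.2)
    (fun _ hE => by
      obtain ⟨B, hB, rfl⟩ := mem_image.1 hE
      exact (mem_powersetCard.1 (erase_mem_powersetCard_erase (hℱ B hB).1
        (hℱ B hB).2.1 (hℱ B hB).2.2)).2)
    (by omega)
    (by rw [card_image_erase_of_forall_mem fun A hA => (h𝒯 A hA).2.1]; omega)
    (forall_mem_image.2 fun A hA => forall_mem_image.2 fun B hB => by
      rw [erase_inter_erase_of_notMem (h𝒯 A hA).2.2 (hℱ B hB).2.2]
      exact hcross A hA B hB)
  rwa [card_image_erase_of_forall_mem fun B hB => (hℱ B hB).2.1] at hlinks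

end Finset

theorem no_common_element_in_F0_general (n : ℕ) (hn : 7 ≤ n)
    (F : Finset (Finset ℕ))
    (hF : ∀ A ∈ F, A ∈ (Finset.Icc 1 n).powersetCard 3)
    (hnt : NontrivIntersecting F)
    (p : ℕ) (hp : p ∈ Finset.Icc 1 n)
    (hpmax : ∀ q ∈ Finset.Icc 1 n,
      (F.filter (fun A => q ∈ A)).card ≤ (F.filter (fun A => p ∈ A)).card)
    (hF0card : n - 2 ≤ (F.filter (fun A => p ∉ A)).card) :
    ¬ ∃ g, ∀ A ∈ F.filter (fun A => p ∉ A), g ∈ A := by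
  rintro ⟨g, hg⟩
  obtain ⟨hint, hnontriv⟩ := hnt
  have hpg : p ≠ g := by
    rintro rfl
    exact hnontriv ⟨p, fun A hA => by_contra fun hpA => hpA (hg A (mem_filter.2 ⟨hA, hpA⟩))⟩
  obtain ⟨B₀, hB₀⟩ : (F.filter fun A => p ∉ A).Nonempty := card_pos.1 (by omega)
  have hgn : g ∈ Icc 1 n := (mem_powersetCard.1 (hF B₀ (mem_filter.1 hB₀).1)).1 (hg B₀ hB₀)
  have hdeg :=
    card_filter_notMem_le (fun A hA hpA => hg A (mem_filter.2 ⟨hA, hpA⟩)) (hpmax g hgn)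
  have hU : #(Icc 1 n) = n := by rw [Nat.card_Icc, Nat.add_sub_cancel]
  have hF₀ := card_le_four_of_crossIntersecting_triples hp hgn hpg (by omega)
    (fun A hA => ⟨hF A (mem_filter.1 hA).1, (mem_filter.1 hA).2⟩)
    (fun B hB => ⟨hF B (mem_filter.1 hB).1, hg B hB, (mem_filter.1 hB).2⟩)
    (by omega) (fun A hA B hB => hint A (mem_filter.1 hA).1 B (mem_filter.1 hB).1)
  omega

theorem no_common_element_in_F0 (n : ℕ) (hn : 7 ≤ n)
    (F : Finset (Finset ℕ))
    (hF : ∀ A ∈ F, A ∈ (Finset.Icc 1 n).powersetCard 3)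
    (hnt : NontrivIntersecting F)
    (hmax : ∀ A ∈ (Finset.Icc 1 n).powersetCard 3, A ∉ F →
      ¬ NontrivIntersecting (insert A F))
    (p : ℕ) (hp : p ∈ Finset.Icc 1 n)
    (hpmax : ∀ q ∈ Finset.Icc 1 n,
      (F.filter (fun A => q ∈ A)).card ≤ (F.filter (fun A => p ∈ A)).card)
    (hF0card : n - 2 ≤ (F.filter (fun A => p ∉ A)).card) :
    ¬ ∃ g, ∀ A ∈ F.filter (fun A => p ∉ A), g ∈ A :=
  no_common_element_in_F0_general n hn F hF hnt p hp hpmax hF0card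
end
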